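/- arXiv:2002.02138 — 8 statements merged into one kernel-verified Lean document; each statement's English description precedes it below -/
import Mathlib

section
/- For t ∈ (0,1), the second derivative of ln_{q,a} satisfies (d²/dt²) ln_{q,a}(t) = ((-ln_q t)^{-a} / χ_{q,a}(t)²) · ( q t^{q-1} ln_q(t) + (1-a) ). -/
noncomputable def lnq (q t : ℝ) : ℝ := if q = 1 then Real.log t else (t ^ (1 - q) - 1) / (1 - q)

noncomputable def chiqa (q a s : ℝ) : ℝ := s ^ q * (-lnq q s) ^ (1 - a)

noncomputable def lnqa (q a t : ℝ) : ℝ := -(1 / a) * (-lnq q t) ^ a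

lemma lnq_hasDerivAt (q t : ℝ) (ht : 0 < t) : HasDerivAt (lnq q) (t ^ (-q)) t := by
  by_cases hq : q = 1
  · have : lnq q = Real.log := by funext x; simp [lnq, hq]
    rw [this, hq]
    have := Real.hasDerivAt_log ht.ne'
    simpa [Real.rpow_neg_one] using this
  · have h1q : (1 : ℝ) - q ≠ 0 := by
      intro h; apply hq; linarith
    have h : HasDerivAt (fun x : ℝ => x ^ (1 - q)) ((1 - q) * t ^ (1 - q - 1)) t :=
      Real.hasDerivAt_rpow_const (Or.inl ht.ne')
    have h2 : HasDerivAt (fun x : ℝ => (x ^ (1 - q) - 1) / (1 - q))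
        (((1 - q) * t ^ (1 - q - 1)) / (1 - q)) t := (h.sub_const 1).div_const _
    have : lnq q = fun x : ℝ => (x ^ (1 - q) - 1) / (1 - q) := by funext x; simp [lnq, hq]
    rw [this]
    have he : 1 - q - 1 = -q := by ring
    rw [he] at h2
    convert h2 using 1
    field_simp

lemma lnq_neg (q t : ℝ) (ht : t ∈ Set.Ioo (0:ℝ) 1) : lnq q t < 0 := by
  obtain ⟨ht0, ht1⟩ := ht
  by_cases hq : q = 1
  · simp [lnq, hq]; exact Real.log_neg ht0 ht1
  · simp only [lnq, if_neg hq]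
    rcases lt_trichotomy (1 - q) 0 with h | h | h
    · apply div_neg_of_pos_of_neg _ h
      have := Real.one_lt_rpow_of_pos_of_lt_one_of_neg ht0 ht1 h
      linarith
    · exact absurd (by linarith : q = 1) hq
    · apply div_neg_of_neg_of_pos _ h
      have := Real.rpow_lt_one ht0.le ht1 h
      linarith

theorem refined_qlog_second_deriv (q a : ℝ) (ha : a ≠ 0) (t : ℝ) (ht : t ∈ Set.Ioo (0:ℝ) 1) :
    deriv (deriv (lnqa q a)) t =
      (-lnq q t) ^ (-a) / (chiqa q a t) ^ 2 * (q * t ^ (q - 1) * lnq q t + (1 - a)) := by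
  have hderiv1 : ∀ x ∈ Set.Ioo (0:ℝ) 1,
      HasDerivAt (lnqa q a) (x ^ (-q) * (-lnq q x) ^ (a - 1)) x := by
    intro x hx
    have hL : HasDerivAt (fun y => -lnq q y) (-(x ^ (-q))) x := (lnq_hasDerivAt q x hx.1).neg
    have hLpos : 0 < -lnq q x := by linarith [lnq_neg q x hx]
    have h := (hL.rpow_const (p := a) (Or.inl hLpos.ne')).const_mul (-(1 / a))
    have : lnqa q a = fun y => -(1 / a) * (-lnq q y) ^ a := by funext y; rfl
    rw [this]
    convert h using 1
    · rfl
    · rfl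
    have hainv : a * (1 / a) = 1 := mul_one_div_cancel ha
    linear_combination hainv * (-(x ^ (-q) * (-lnq q x) ^ (a - 1)))
  have hev : deriv (lnqa q a) =ᶠ[nhds t]
      (fun x => x ^ (-q) * (-lnq q x) ^ (a - 1)) := by
    filter_upwards [isOpen_Ioo.mem_nhds ht] with x hx
    exact (hderiv1 x hx).deriv
  rw [hev.deriv_eq]
  obtain ⟨ht0, ht1⟩ := ht
  have hLpos : 0 < -lnq q t := by linarith [lnq_neg q t ⟨ht0, ht1⟩]
  have hL : HasDerivAt (fun y => -lnq q y) (-(t ^ (-q))) t := (lnq_hasDerivAt q t ht0).neg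
  have h1 : HasDerivAt (fun x : ℝ => x ^ (-q)) (-q * t ^ (-q - 1)) t :=
    Real.hasDerivAt_rpow_const (Or.inl ht0.ne')
  have h2 : HasDerivAt (fun x => (-lnq q x) ^ (a - 1))
      (-(t ^ (-q)) * (a - 1) * (-lnq q t) ^ (a - 1 - 1)) t := by
    simpa using hL.rpow_const (p := a - 1) (Or.inl hLpos.ne')
  have h3 : HasDerivAt (fun x => x ^ (-q) * (-lnq q x) ^ (a - 1)) _ t := h1.mul h2
  rw [h3.deriv]
  -- now algebra
  set L := -lnq q t with hLdef
  have hlnq : lnq q t = -L := by rw [hLdef]; ring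
  rw [hlnq]
  unfold chiqa
  rw [hlnq]
  have htQpos : (0:ℝ) < t ^ q := Real.rpow_pos_of_pos ht0 q
  have hLApos : (0:ℝ) < L ^ a := Real.rpow_pos_of_pos hLpos a
  have e1 : t ^ (-q) = (t ^ q)⁻¹ := Real.rpow_neg ht0.le q
  have e2 : t ^ (-q - 1) = (t ^ q * t)⁻¹ := by
    rw [show -q - 1 = -(q + 1) by ring, Real.rpow_neg ht0.le, Real.rpow_add ht0, Real.rpow_one]
  have e3 : t ^ (q - 1) = t ^ q / t := by
    rw [Real.rpow_sub ht0, Real.rpow_one]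
  have e4 : L ^ (a - 1) = L ^ a / L := by
    rw [Real.rpow_sub hLpos, Real.rpow_one]
  have e5 : L ^ (a - 1 - 1) = L ^ a / (L * L) := by
    rw [show a - 1 - 1 = a - 2 by ring, Real.rpow_sub hLpos, show (2:ℝ) = (1:ℝ) + 1 by norm_num,
      Real.rpow_add hLpos, Real.rpow_one]
  have e6 : L ^ (-a) = (L ^ a)⁻¹ := Real.rpow_neg hLpos.le a
  have e7 : L ^ (1 - a) = L / L ^ a := by
    rw [Real.rpow_sub hLpos, Real.rpow_one]
  rw [neg_neg, e1, e2, e3, e4, e5, e6, e7]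
  field_simp
  ring
end

section
/- Let 0 < q ≤ 1 and a ≠ 0. Define T_{q,a} = 1/exp_q(max{0, (1-a)/q}). Then ln_{q,a} is strictly concave on the interval (0, T_{q,a}). -/
noncomputable def expq (q τ : ℝ) : ℝ :=
  if q = 1 then Real.exp τ else (1 + (1 - q) * τ) ^ (1 / (1 - q))

lemma aux_concave (T : ℝ) (f g : ℝ → ℝ)
    (hf : ∀ t ∈ Set.Ioo (0:ℝ) T, HasDerivAt f (g t) t)
    (hg : ∀ t ∈ Set.Ioo (0:ℝ) T, ∃ G, G < 0 ∧ HasDerivAt g G t) :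
    StrictConcaveOn ℝ (Set.Ioo 0 T) f := by
  apply strictConcaveOn_of_deriv2_neg (convex_Ioo 0 T)
  · exact fun x hx => (hf x hx).continuousAt.continuousWithinAt
  · intro x hx
    rw [interior_Ioo] at hx
    obtain ⟨G, hGneg, hG⟩ := hg x hx
    have hev : deriv f =ᶠ[nhds x] g := by
      filter_upwards [isOpen_Ioo.mem_nhds hx] with y hy
      exact (hf y hy).deriv
    have h2 : deriv (deriv f) x = deriv g x := hev.deriv_eq
    have : deriv^[2] f x = deriv (deriv f) x := rfl
    rw [this, h2, hG.deriv]
    exact hGneg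

theorem refined_qlog_strictly_concave_small_q (q a : ℝ) (hq0 : 0 < q) (hq1 : q ≤ 1)
    (ha : a ≠ 0) :
    StrictConcaveOn ℝ (Set.Ioo 0 (1 / expq q (max 0 ((1 - a) / q)))) (lnqa q a) := by
  rcases eq_or_lt_of_le hq1 with hq | hq
  · -- q = 1
    subst hq
    have hm0 : (0:ℝ) ≤ max 0 ((1 - a) / 1) := le_max_left _ _
    have hma : 1 - a ≤ max 0 ((1 - a) / 1) := by
      have := le_max_right (0:ℝ) ((1 - a) / 1); linarith [this, (div_one (1 - a)).symm ▸ this]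
    set m := max 0 ((1 - a) / 1) with hmdef
    have hfun : lnqa 1 a = fun t => -(1 / a) * (-Real.log t) ^ a := by
      funext t; simp [lnqa, lnq]
    have hTdef : (1:ℝ) / expq 1 m = (Real.exp m)⁻¹ := by
      rw [expq, if_pos rfl, one_div]
    rw [hfun, hTdef]
    apply aux_concave _ _ (fun t => (-Real.log t) ^ (a - 1) * t⁻¹)
    · intro t ht
      obtain ⟨ht0, htT⟩ := ht
      have hlog : Real.log t < -m := by
        rw [Real.log_lt_iff_lt_exp ht0, Real.exp_neg]; exact htT
      have hupos : 0 < -Real.log t := by linarith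
      have hu : HasDerivAt (fun t => -Real.log t) (-t⁻¹) t := (Real.hasDerivAt_log ht0.ne').neg
      have h := HasDerivAt.const_mul (-(1/a)) (hu.rpow_const (p := a) (Or.inl hupos.ne'))
      convert h using 1
      all_goals try rfl
      field_simp
      try ring
    · intro t ht
      obtain ⟨ht0, htT⟩ := ht
      have hlog : Real.log t < -m := by
        rw [Real.log_lt_iff_lt_exp ht0, Real.exp_neg]; exact htT
      set u := -Real.log t with hudef
      have hupos : 0 < u := by simp only [hudef]; linarith
      have hu : HasDerivAt (fun t => -Real.log t) (-t⁻¹) t := (Real.hasDerivAt_log ht0.ne').neg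
      have hd1 := hu.rpow_const (p := a - 1) (Or.inl hupos.ne')
      have hd2 := hasDerivAt_inv ht0.ne'
      refine ⟨_, ?_, hd1.mul hd2⟩
      have e1 : u ^ (a - 1) = u * u ^ (a - 2) := by
        rw [show a - 1 = 1 + (a - 2) by ring, Real.rpow_add hupos, Real.rpow_one]
      have hX : (0:ℝ) < u ^ (a - 2) := Real.rpow_pos_of_pos hupos _
      have key : 0 < (a - 1) + u := by linarith
      have hGeq : -t⁻¹ * (a - 1) * u ^ (a - 1 - 1) * t⁻¹ + u ^ (a - 1) * (-(t ^ 2)⁻¹)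
          = -((t ^ 2)⁻¹ * (u ^ (a - 2) * ((a - 1) + u))) := by
        rw [show a - 1 - 1 = a - 2 by ring, e1]
        field_simp
        ring
      rw [hGeq]
      have := mul_pos (inv_pos.mpr (pow_pos ht0 2)) (mul_pos hX key)
      linarith
  · -- q < 1
    have hq1ne : q ≠ 1 := ne_of_lt hq
    have hp : (0:ℝ) < 1 - q := by linarith
    have hp1 : 1 - q < 1 := by linarith
    set m := max 0 ((1 - a) / q) with hmdef
    have hm0 : (0:ℝ) ≤ m := le_max_left _ _
    have hqm : 1 - a ≤ m * q := by
      have h1 : (1 - a) / q ≤ m := le_max_right _ _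
      exact (div_le_iff₀ hq0).mp h1
    set B := 1 + (1 - q) * m with hBdef
    have hB1 : (1:ℝ) ≤ B := by nlinarith
    have hB0 : (0:ℝ) < B := by linarith
    have hfun : lnqa q a = fun t => -(1 / a) * ((1 - t ^ (1 - q)) / (1 - q)) ^ a := by
      funext t
      have : -lnq q t = (1 - t ^ (1 - q)) / (1 - q) := by
        rw [lnq, if_neg hq1ne]; ring
      rw [lnqa, this]
    have hTdef : (1:ℝ) / expq q m = (B ^ (1 / (1 - q)))⁻¹ := by
      rw [expq, if_neg hq1ne, one_div]
    set T := (B ^ (1 / (1 - q)))⁻¹ with hTdef2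
    have hS : T ^ (1 - q) = B⁻¹ := by
      rw [hTdef2, Real.inv_rpow (Real.rpow_nonneg hB0.le _), ← Real.rpow_mul hB0.le,
        one_div, inv_mul_cancel₀ (ne_of_gt hp), Real.rpow_one]
    rw [hfun, hTdef]
    apply aux_concave _ _
      (fun t => ((1 - t ^ (1 - q)) / (1 - q)) ^ (a - 1) * t ^ ((1 - q) - 1))
    · intro t ht
      obtain ⟨ht0, htT⟩ := ht
      have hsS : t ^ (1 - q) < T ^ (1 - q) := Real.rpow_lt_rpow ht0.le htT hp
      have hs0 : 0 < t ^ (1 - q) := Real.rpow_pos_of_pos ht0 _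
      have hsB : t ^ (1 - q) * B < 1 := by
        have h2 := mul_lt_mul_of_pos_right (hS ▸ hsS) hB0
        rwa [inv_mul_cancel₀ hB0.ne'] at h2
      have hs1 : t ^ (1 - q) < 1 := by nlinarith [mul_nonneg hs0.le (mul_nonneg hp.le hm0)]
      have hupos : 0 < (1 - t ^ (1 - q)) / (1 - q) := div_pos (by linarith) hp
      have hdpow : HasDerivAt (fun x : ℝ => x ^ (1 - q)) ((1 - q) * t ^ ((1 - q) - 1)) t :=
        Real.hasDerivAt_rpow_const (Or.inl ht0.ne')
      have hu : HasDerivAt (fun x : ℝ => (1 - x ^ (1 - q)) / (1 - q)) (-(t ^ ((1 - q) - 1))) t := by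
        have h := (hdpow.const_sub 1).div_const (1 - q)
        convert h using 1
        all_goals try rfl
        field_simp
        try ring
      have h := HasDerivAt.const_mul (-(1/a)) (hu.rpow_const (p := a) (Or.inl hupos.ne'))
      convert h using 1
      all_goals try rfl
      field_simp
      try ring
    · intro t ht
      obtain ⟨ht0, htT⟩ := ht
      have hsS : t ^ (1 - q) < T ^ (1 - q) := Real.rpow_lt_rpow ht0.le htT hp
      have hs0 : 0 < t ^ (1 - q) := Real.rpow_pos_of_pos ht0 _
      have hsB : t ^ (1 - q) * B < 1 := by
        have h2 := mul_lt_mul_of_pos_right (hS ▸ hsS) hB0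
        rwa [inv_mul_cancel₀ hB0.ne'] at h2
      have hs1 : t ^ (1 - q) < 1 := by nlinarith [mul_nonneg hs0.le (mul_nonneg hp.le hm0)]
      set s := t ^ (1 - q) with hsdef
      set u := (1 - s) / (1 - q) with hudef
      have hupos : 0 < u := div_pos (by linarith) hp
      have hdpow : HasDerivAt (fun x : ℝ => x ^ (1 - q)) ((1 - q) * t ^ ((1 - q) - 1)) t :=
        Real.hasDerivAt_rpow_const (Or.inl ht0.ne')
      have hu : HasDerivAt (fun x : ℝ => (1 - x ^ (1 - q)) / (1 - q)) (-(t ^ ((1 - q) - 1))) t := by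
        have h := (hdpow.const_sub 1).div_const (1 - q)
        convert h using 1
        all_goals try rfl
        field_simp
        try ring
      have hd1 := hu.rpow_const (p := a - 1) (Or.inl hupos.ne')
      have hd2 : HasDerivAt (fun x : ℝ => x ^ ((1 - q) - 1)) (((1 - q) - 1) * t ^ ((1 - q) - 1 - 1)) t :=
        Real.hasDerivAt_rpow_const (Or.inl ht0.ne')
      refine ⟨_, ?_, hd1.mul hd2⟩
      have e1 : u ^ (a - 1) = u * u ^ (a - 2) := by
        rw [show a - 1 = 1 + (a - 2) by ring, Real.rpow_add hupos, Real.rpow_one]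
      have e2 : t ^ ((1 - q) - 1) * t ^ ((1 - q) - 1) = t ^ (1 - q) * t ^ ((1 - q) - 2) := by
        rw [← Real.rpow_add ht0, ← Real.rpow_add ht0]; ring_nf
      have hX : (0:ℝ) < u ^ (a - 2) := Real.rpow_pos_of_pos hupos _
      have hY : (0:ℝ) < t ^ ((1 - q) - 2) := Real.rpow_pos_of_pos ht0 _
      have key : 0 < (a - 1) * s + q * u := by
        have h1 : s * ((1 - q) * m) < 1 - s := by nlinarith
        have h2 : s * (1 - q) * (1 - a) ≤ s * (1 - q) * (m * q) :=
          mul_le_mul_of_nonneg_left hqm (by positivity)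
        have h3 := mul_lt_mul_of_pos_left h1 hq0
        have h4 : 0 < (a - 1) * s * (1 - q) + q * (1 - s) := by nlinarith
        have heq : (a - 1) * s + q * ((1 - s) / (1 - q))
            = ((a - 1) * s * (1 - q) + q * (1 - s)) / (1 - q) := by
          field_simp
          try ring
        rw [hudef, heq]
        exact div_pos h4 hp
      have hGeq : -(t ^ ((1 - q) - 1)) * (a - 1) * u ^ (a - 1 - 1) * t ^ ((1 - q) - 1)
            + u ^ (a - 1) * (((1 - q) - 1) * t ^ ((1 - q) - 1 - 1))
          = -(t ^ ((1 - q) - 2) * (u ^ (a - 2) * ((a - 1) * s + q * u))) := by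
        rw [show a - 1 - 1 = a - 2 by ring, show (1 - q) - 1 - 1 = (1 - q) - 2 by ring, e1, hsdef]
        linear_combination (-(a - 1) * u ^ (a - 2)) * e2
      rw [hGeq]
      have := mul_pos hY (mul_pos hX key)
      linarith
end

section
/- Let q > 1 with 1 - a < q/(q-1), a ≠ 0, and T_{q,a} = 1/exp_q(max{0,(1-a)/q}). Then ln_{q,a} is strictly concave on (0, T_{q,a}). -/
lemma lnqa_eq (q a : ℝ) (hq : 1 < q) :
    lnqa q a = fun t => -(1 / a) * ((t ^ (1 - q) - 1) / (q - 1)) ^ a := by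
  funext t
  have hq1 : q ≠ 1 := by intro h; rw [h] at hq; exact lt_irrefl 1 hq
  have h1 : (1 : ℝ) - q ≠ 0 := by intro h; apply hq1; linarith
  have h2 : q - 1 ≠ 0 := by intro h; apply hq1; linarith
  simp only [lnqa, lnq, if_neg hq1]
  congr 2
  field_simp
  ring

lemma G_pos (q t : ℝ) (hq : 1 < q) (ht : 0 < t) (ht1 : t < 1) :
    0 < (t ^ (1 - q) - 1) / (q - 1) := by
  apply div_pos _ (by linarith)
  have : (1 : ℝ) < t ^ (1 - q) :=
    (Real.one_lt_rpow_iff_of_pos ht).2 (Or.inr ⟨ht1, by linarith⟩)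
  linarith

lemma hqne_aux {q : ℝ} (hq : 1 < q) : q - 1 = 0 → False := by intro h; linarith

lemma aux_deriv_G (q t : ℝ) (hq : 1 < q) (ht : 0 < t) :
    HasDerivAt (fun t => (t ^ (1 - q) - 1) / (q - 1)) (-t ^ (-q)) t := by
  have h := ((Real.hasDerivAt_rpow_const (p := 1 - q) (Or.inl ht.ne')).sub_const 1).div_const
    (q - 1)
  refine h.congr_deriv (Eq.symm ?_)
  have : 1 - q - 1 = -q := by ring
  rw [this, eq_div_iff (fun h => hqne_aux hq h)]
  ring

lemma aux_deriv1 (q a t : ℝ) (hq : 1 < q) (ha : a ≠ 0) (ht : 0 < t) (ht1 : t < 1) :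
    HasDerivAt (lnqa q a) (((t ^ (1 - q) - 1) / (q - 1)) ^ (a - 1) * t ^ (-q)) t := by
  rw [lnqa_eq q a hq]
  have hG := G_pos q t hq ht ht1
  have h := ((aux_deriv_G q t hq ht).rpow_const (p := a) (Or.inl hG.ne')).const_mul (-(1 / a))
  refine h.congr_deriv (Eq.symm ?_)
  field_simp

lemma aux_deriv2 (q a t : ℝ) (hq : 1 < q) (ht : 0 < t) (ht1 : t < 1) :
    HasDerivAt (fun t => ((t ^ (1 - q) - 1) / (q - 1)) ^ (a - 1) * t ^ (-q))
      ((a - 1) * ((t ^ (1 - q) - 1) / (q - 1)) ^ (a - 1 - 1) * (-t ^ (-q)) * t ^ (-q)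
        + ((t ^ (1 - q) - 1) / (q - 1)) ^ (a - 1) * (-q * t ^ (-q - 1))) t := by
  have hG := G_pos q t hq ht ht1
  have h := ((aux_deriv_G q t hq ht).rpow_const (p := a - 1) (Or.inl hG.ne')).mul
    (Real.hasDerivAt_rpow_const (p := -q) (Or.inl ht.ne'))
  refine h.congr_deriv (Eq.symm ?_)
  ring

theorem refined_qlog_strictly_concave_large_q (q a : ℝ) (hq : 1 < q) (hqa : 1 - a < q / (q - 1))
    (ha : a ≠ 0) :
    StrictConcaveOn ℝ (Set.Ioo 0 (1 / expq q (max 0 ((1 - a) / q)))) (lnqa q a) := by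
  have hq1 : (0 : ℝ) < q - 1 := by linarith
  have hq0 : (0 : ℝ) < q := by linarith
  have hqne : q ≠ 1 := by intro h; rw [h] at hq; exact lt_irrefl 1 hq
  set c : ℝ := (a - 1) * (q - 1) + q with hc
  have hc0 : 0 < c := by
    have h := (lt_div_iff₀ hq1).mp hqa
    nlinarith
  set T := 1 / expq q (max 0 ((1 - a) / q)) with hT
  have hTfacts : 0 < T ∧ T ≤ 1 ∧ q ≤ T ^ (1 - q) * c := by
    rcases le_or_gt 1 a with hA | hA
    · have hm : max 0 ((1 - a) / q) = 0 :=
        max_eq_left (div_nonpos_of_nonpos_of_nonneg (by linarith) hq0.le)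
      have hE : expq q 0 = 1 := by
        simp [expq, if_neg hqne]
      rw [hT, hm, hE]
      refine ⟨by norm_num, by norm_num, ?_⟩
      norm_num [Real.one_rpow]
      nlinarith
    · have hm : max 0 ((1 - a) / q) = (1 - a) / q :=
        max_eq_right (div_nonneg (by linarith) hq0.le)
      set b : ℝ := 1 + (1 - q) * ((1 - a) / q) with hb
      have hbc : b = c / q := by rw [eq_div_iff hq0.ne', hb, hc, add_mul, mul_assoc, div_mul_cancel₀ _ hq0.ne']; ring
      have hb0 : 0 < b := by rw [hbc]; exact div_pos hc0 hq0
      have hb1 : b < 1 := by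
        rw [hbc, div_lt_one hq0]; nlinarith
      have hE : expq q ((1 - a) / q) = b ^ (1 / (1 - q)) := by
        simp [expq, if_neg hqne, hb]
      have hbe : (0 : ℝ) < b ^ (1 / (1 - q)) := Real.rpow_pos_of_pos hb0 _
      have hT' : T = (b ^ (1 / (1 - q)))⁻¹ := by rw [hT, hm, hE, one_div]
      have hbe1 : 1 < b ^ (1 / (1 - q)) := by
        rw [Real.one_lt_rpow_iff_of_pos hb0]
        right
        constructor
        · exact hb1
        · apply div_neg_of_pos_of_neg one_pos; linarith
      refine ⟨by rw [hT']; positivity, ?_, ?_⟩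
      · rw [hT']
        have := hbe1.le
        calc (b ^ (1 / (1 - q)))⁻¹ ≤ 1⁻¹ := by
              apply inv_anti₀ one_pos this
          _ = 1 := inv_one
      · have hTb : T = b ^ (1 / (q - 1)) := by
          rw [hT', ← Real.rpow_neg hb0.le]
          congr 1
          have hne1 : (1 : ℝ) - q ≠ 0 := ne_of_lt (by linarith)
          have hne2 : q - 1 ≠ 0 := ne_of_gt (by linarith)
          field_simp
          ring
        have hTe : T ^ (1 - q) = b⁻¹ := by
          rw [hTb, ← Real.rpow_mul hb0.le,
            show 1 / (q - 1) * (1 - q) = -1 by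
              rw [div_mul_eq_mul_div, div_eq_iff (by linarith : q - 1 ≠ 0)]; ring,
            Real.rpow_neg_one]
        rw [hTe, hbc]
        rw [inv_div, div_mul_cancel₀]
        exact hc0.ne'
  obtain ⟨hT0, hT1, hTc⟩ := hTfacts
  apply strictConcaveOn_of_deriv2_neg (convex_Ioo _ _)
  · intro t ht
    exact (aux_deriv1 q a t hq ha ht.1 (lt_of_lt_of_le ht.2 hT1)).continuousAt.continuousWithinAt
  · intro t ht
    rw [interior_Ioo] at ht
    obtain ⟨ht0, htT⟩ := ht
    have ht1 : t < 1 := lt_of_lt_of_le htT hT1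
    set G : ℝ := (t ^ (1 - q) - 1) / (q - 1) with hGdef
    have hG := G_pos q t hq ht0 ht1
    -- second derivative computation
    have hEq : Set.EqOn (deriv (lnqa q a))
        (fun t => ((t ^ (1 - q) - 1) / (q - 1)) ^ (a - 1) * t ^ (-q)) (Set.Ioo 0 T) :=
      fun s hs => (aux_deriv1 q a s hq ha hs.1 (lt_of_lt_of_le hs.2 hT1)).deriv
    have hmem : Set.Ioo 0 T ∈ nhds t := isOpen_Ioo.mem_nhds ⟨ht0, htT⟩
    have hd2 : deriv^[2] (lnqa q a) t =
        (a - 1) * G ^ (a - 1 - 1) * (-t ^ (-q)) * t ^ (-q)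
          + G ^ (a - 1) * (-q * t ^ (-q - 1)) := by
      show deriv (deriv (lnqa q a)) t = _
      rw [Filter.EventuallyEq.deriv_eq (Filter.eventuallyEq_of_mem hmem hEq)]
      exact (aux_deriv2 q a t hq ht0 ht1).deriv
    rw [hd2]
    -- key inequality
    have hs : T ^ (1 - q) < t ^ (1 - q) :=
      Real.rpow_lt_rpow_of_neg ht0 htT (by linarith)
    have hsc : q < t ^ (1 - q) * c := by
      calc q ≤ T ^ (1 - q) * c := hTc
        _ < t ^ (1 - q) * c := by exact mul_lt_mul_of_pos_right hs hc0
    have hbr : 0 < (a - 1) * t ^ (1 - q) + q * G := by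
      have heq : (a - 1) * t ^ (1 - q) + q * G = (t ^ (1 - q) * c - q) / (q - 1) := by
        rw [hGdef, hc]; field_simp; ring
      rw [heq]
      exact div_pos (by linarith) hq1
    have e1 : t ^ (-q) * t ^ (-q) = t ^ (-q - 1) * t ^ (1 - q) := by
      rw [← Real.rpow_add ht0, ← Real.rpow_add ht0]; ring_nf
    have e2 : G ^ (a - 1) = G ^ (a - 1 - 1) * G := by
      rw [show a - 1 = a - 1 - 1 + 1 by ring, Real.rpow_add_one hG.ne']
      rw [sub_add_cancel]
    have hfac : 0 < G ^ (a - 1 - 1) * t ^ (-q - 1) :=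
      mul_pos (Real.rpow_pos_of_pos hG _) (Real.rpow_pos_of_pos ht0 _)
    have hE : (a - 1) * G ^ (a - 1 - 1) * (-t ^ (-q)) * t ^ (-q)
          + G ^ (a - 1) * (-q * t ^ (-q - 1))
        = -(G ^ (a - 1 - 1) * t ^ (-q - 1)) * ((a - 1) * t ^ (1 - q) + q * G) := by
      rw [e2]
      linear_combination (-(a - 1) * G ^ (a - 1 - 1)) * e1
    rw [hE]
    have := mul_pos hfac hbr
    linarith
end

section
/- For q ∈ ℝ, a ≠ 0, and τ in the range of ln_{q,a} on (0,1), the first derivative of exp_{q,a} is exp_{q,a}'(τ) = exp_{q,a}(τ)^q · (-aτ)^{(1-a)/a}. -/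
noncomputable def expqa (q a τ : ℝ) : ℝ := expq q (-(-(a * τ)) ^ (1 / a))

theorem refined_qexp_first_deriv (q a : ℝ) (ha : a ≠ 0)
    (τ : ℝ) (hτ : τ ∈ lnqa q a '' Set.Ioo 0 1) :
    HasDerivAt (expqa q a) (expqa q a τ ^ q * (-(a * τ)) ^ ((1 - a) / a)) τ := by
  obtain ⟨t, ⟨ht0, ht1⟩, rfl⟩ := hτ
  set τ₀ := lnqa q a t with hτ₀
  have hlnq : lnq q t < 0 := by
    unfold lnq
    split_ifs with hq
    · exact Real.log_neg ht0 ht1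
    · rcases lt_or_gt_of_ne (sub_ne_zero.mpr fun h => hq h.symm) with h | h
      · apply div_neg_of_pos_of_neg _ h
        have := Real.one_lt_rpow_of_pos_of_lt_one_of_neg ht0 ht1 h
        linarith
      · apply div_neg_of_neg_of_pos _ h
        have := Real.rpow_lt_one ht0.le ht1 h
        linarith
  have hx : 0 < -lnq q t := neg_pos.mpr hlnq
  have haτ : a * τ₀ = -((-lnq q t) ^ a) := by
    rw [hτ₀]; unfold lnqa; field_simp
  have hu : 0 < -(a * τ₀) := by
    rw [haτ, neg_neg]; exact Real.rpow_pos_of_pos hx a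
  have hg : -(-(a * τ₀)) ^ (1 / a) = lnq q t := by
    rw [haτ, neg_neg, one_div, Real.rpow_rpow_inv hx.le ha, neg_neg]
  -- inner derivative
  have h1 : HasDerivAt (fun s : ℝ => -(a * s)) (-a) τ₀ := by
    exact (((hasDerivAt_id τ₀).const_mul a).neg).congr_deriv (by simp)
  have h2 := Real.hasDerivAt_rpow_const (p := 1 / a) (Or.inl hu.ne')
  have h3 := (h2.comp τ₀ h1).neg
  have hinner : HasDerivAt (fun s : ℝ => -(-(a * s)) ^ (1 / a))
      ((-(a * τ₀)) ^ ((1 - a) / a)) τ₀ := by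
    refine h3.congr_deriv ?_
    have he : (1 - a) / a = 1 / a - 1 := by field_simp
    rw [he]; field_simp
  by_cases hq : q = 1
  · subst hq
    have heq1 : expq 1 = Real.exp := by funext x; simp [expq]
    have houter : HasDerivAt (expq 1) (Real.exp (-(-(a * τ₀)) ^ (1 / a)))
        (-(-(a * τ₀)) ^ (1 / a)) := by
      rw [heq1]; exact Real.hasDerivAt_exp _
    have hfin := houter.comp τ₀ hinner
    refine hfin.congr_deriv ?_
    simp [expqa, expq]
  · have h1q : (1 : ℝ) - q ≠ 0 := sub_ne_zero.mpr fun h => hq h.symm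
    set x₀ := -(-(a * τ₀)) ^ (1 / a) with hx₀def
    have hval : 1 + (1 - q) * x₀ = t ^ (1 - q) := by
      rw [hg]; unfold lnq; rw [if_neg hq]; field_simp; ring
    have hpos : 0 < 1 + (1 - q) * x₀ := by
      rw [hval]; exact Real.rpow_pos_of_pos ht0 _
    have h4 : HasDerivAt (fun x : ℝ => 1 + (1 - q) * x) (1 - q) x₀ := by
      simpa using ((hasDerivAt_id x₀).const_mul (1 - q)).const_add 1
    have h5 := Real.hasDerivAt_rpow_const (p := 1 / (1 - q)) (Or.inl hpos.ne')
    have houter := h5.comp x₀ h4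
    have houter' : HasDerivAt (expq q) (expq q x₀ ^ q) x₀ := by
      have heq : expq q = fun x : ℝ => (1 + (1 - q) * x) ^ (1 / (1 - q)) := by
        funext x; simp [expq, hq]
      rw [heq]
      refine houter.congr_deriv ?_
      simp only [expq, hq, if_false]
      rw [← Real.rpow_mul hpos.le]
      have he2 : (1 / (1 - q)) * q = 1 / (1 - q) - 1 := by field_simp; ring
      rw [he2]
      field_simp
    exact houter'.comp τ₀ hinner
end

section
/- Define recursively b_0^1 = 1 and b_j^{n+1} = (na(q-1)+1) b_0^n for j=0, ((na+j)(q-1)+1) b_j^n − (n(1-a)−(j-1)) b_{j-1}^n for 1 ≤ j ≤ n−1, and (na−1) b_{n-1}^n for j = n. Then for all n ∈ ℕ and τ in the range of ln_{q,a}, (d^n/dτ^n) exp_{q,a}(τ) = exp_{q,a}(τ)^{(n-1)(q-1)+q} (-aτ)^{n(1-a)/a} Σ_{j=0}^{n-1} b_j^n (-aτ)^{-j/a}. -/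
noncomputable def bcoef (q a : ℝ) : ℕ → ℕ → ℝ
  | 0, _ => 0
  | 1, j => if j = 0 then 1 else 0
  | (n + 2), j =>
      if j = 0 then (((n : ℝ) + 1) * a * (q - 1) + 1) * bcoef q a (n + 1) 0
      else if j = n + 1 then (((n : ℝ) + 1) * a - 1) * bcoef q a (n + 1) n
      else ((((n : ℝ) + 1) * a + (j : ℝ)) * (q - 1) + 1) * bcoef q a (n + 1) j
           - (((n : ℝ) + 1) * (1 - a) - ((j : ℝ) - 1)) * bcoef q a (n + 1) (j - 1)


lemma bcoef_eq_zero (q a : ℝ) : ∀ n j : ℕ, n ≤ j → bcoef q a n j = 0 := by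
  intro n
  induction n using Nat.strong_induction_on with
  | _ n ih =>
    match n with
    | 0 => intro j _; rfl
    | 1 =>
      intro j hj
      have : j ≠ 0 := by omega
      simp [bcoef, this]
    | (m+2) =>
      intro j hj
      have hj0 : j ≠ 0 := by omega
      have hj1 : j ≠ m + 1 := by omega
      rw [bcoef, if_neg hj0, if_neg hj1, ih (m+1) (by omega) j (by omega),
        ih (m+1) (by omega) (j-1) (by omega)]
      ring

lemma bcoef_succ (q a : ℝ) (n j : ℕ) (hn : 1 ≤ n) (hjn : j ≤ n) :
    bcoef q a (n+1) j = (((n:ℝ)*a + (j:ℝ))*(q-1)+1) * bcoef q a n j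
      + ((j:ℝ) - 1 - (n:ℝ)*(1-a)) * (if j = 0 then 0 else bcoef q a n (j-1)) := by
  obtain ⟨m, rfl⟩ : ∃ m, n = m + 1 := ⟨n - 1, by omega⟩
  by_cases hj0 : j = 0
  · subst hj0
    rw [bcoef, if_pos rfl]
    push_cast
    ring
  · by_cases hjtop : j = m + 1
    · subst hjtop
      rw [bcoef, if_neg hj0, if_pos rfl, if_neg hj0,
        bcoef_eq_zero q a (m+1) (m+1) le_rfl]
      push_cast
      ring
    · rw [bcoef, if_neg hj0, if_neg hjtop, if_neg hj0]
      push_cast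
      ring

lemma sum_id (q a : ℝ) (n : ℕ) (hn : 1 ≤ n) (x : ℕ → ℝ) :
    ∑ j ∈ Finset.range (n+1), bcoef q a (n+1) j * x j
    = ∑ j ∈ Finset.range n, bcoef q a n j *
        (((((n:ℝ)*a + (j:ℝ))*(q-1)+1) * x j) + (((j:ℝ) - (n:ℝ)*(1-a)) * x (j+1))) := by
  have h1 : ∀ j ∈ Finset.range (n+1), bcoef q a (n+1) j * x j
      = (((n:ℝ)*a + (j:ℝ))*(q-1)+1) * bcoef q a n j * x j
        + ((j:ℝ) - 1 - (n:ℝ)*(1-a)) * (if j = 0 then 0 else bcoef q a n (j-1)) * x j := by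
    intro j hj
    rw [bcoef_succ q a n j hn (by simpa using Nat.lt_succ_iff.mp (Finset.mem_range.mp hj))]
    ring
  rw [Finset.sum_congr rfl h1, Finset.sum_add_distrib]
  have h2 : ∑ j ∈ Finset.range (n+1), (((n:ℝ)*a + (j:ℝ))*(q-1)+1) * bcoef q a n j * x j
      = ∑ j ∈ Finset.range n, (((n:ℝ)*a + (j:ℝ))*(q-1)+1) * bcoef q a n j * x j := by
    rw [Finset.sum_range_succ, bcoef_eq_zero q a n n le_rfl]
    ring
  have h3 : ∑ j ∈ Finset.range (n+1),
        ((j:ℝ) - 1 - (n:ℝ)*(1-a)) * (if j = 0 then 0 else bcoef q a n (j-1)) * x j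
      = ∑ j ∈ Finset.range n, ((j:ℝ) - (n:ℝ)*(1-a)) * bcoef q a n j * x (j+1) := by
    rw [Finset.sum_range_succ']
    simp only [if_pos rfl, Nat.add_sub_cancel, if_neg (Nat.succ_ne_zero _)]
    push_cast
    rw [mul_zero, zero_mul, add_zero]
    exact Finset.sum_congr rfl (fun j _ => by ring)
  rw [h2, h3, ← Finset.sum_add_distrib]
  exact Finset.sum_congr rfl (fun j _ => by ring)

section Analysis

variable {q a : ℝ} (ha : a ≠ 0)

/-- condition defining the good open set -/
def goodSet (q a : ℝ) : Set ℝ :=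
  {τ : ℝ | 0 < -(a*τ) ∧ 0 < 1 - (1-q) * (-(a*τ)) ^ (1/a)}

lemma isOpen_goodSet (q a : ℝ) : IsOpen (goodSet q a) := by
  have hV : IsOpen {τ : ℝ | 0 < -(a*τ)} := by
    have : Continuous (fun τ : ℝ => -(a*τ)) := by continuity
    exact isOpen_lt continuous_const this
  have hco : ContinuousOn (fun τ : ℝ => 1 - (1-q) * (-(a*τ)) ^ (1/a)) {τ : ℝ | 0 < -(a*τ)} := by
    intro τ hτ
    have h1 : Continuous (fun τ : ℝ => -(a*τ)) := by continuity
    have h3 : ContinuousAt (fun τ : ℝ => (-(a*τ)) ^ (1/a)) τ :=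
      h1.continuousAt.rpow_const (Or.inl (ne_of_gt hτ))
    exact (continuousAt_const.sub (continuousAt_const.mul h3)).continuousWithinAt
  have : goodSet q a = {τ : ℝ | 0 < -(a*τ)} ∩
      (fun τ : ℝ => 1 - (1-q) * (-(a*τ)) ^ (1/a)) ⁻¹' Set.Ioi 0 := by
    ext τ; simp [goodSet, Set.mem_setOf_eq, and_comm]
  rw [this]
  exact hco.isOpen_inter_preimage hV isOpen_Ioi

lemma mem_goodSet (ha : a ≠ 0) : ∀ τ ∈ lnqa q a '' Set.Ioo 0 1, τ ∈ goodSet q a := by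
  rintro τ ⟨t, ⟨ht0, ht1⟩, rfl⟩
  have hl : lnq q t < 0 := by
    unfold lnq
    by_cases hq : q = 1
    · rw [if_pos hq]; exact Real.log_neg ht0 ht1
    · rw [if_neg hq]
      rcases lt_or_gt_of_ne (fun h : q = 1 => hq h) with h | h
      · -- q < 1, so 1 - q > 0, t^(1-q) < 1
        have hp : (0:ℝ) < 1 - q := by linarith
        have : t ^ (1-q) < 1 := Real.rpow_lt_one (le_of_lt ht0) ht1 hp
        exact div_neg_of_neg_of_pos (by linarith) hp
      · have hp : 1 - q < 0 := by linarith
        have : 1 < t ^ (1-q) := Real.one_lt_rpow_iff_of_pos ht0 |>.mpr (Or.inr ⟨ht1, hp⟩)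
        exact div_neg_of_pos_of_neg (by linarith) hp
  set u : ℝ := -lnq q t with hu
  have hu0 : 0 < u := by simp [hu]; linarith
  have key : -(a * lnqa q a t) = u ^ a := by
    unfold lnqa
    rw [← hu]
    field_simp
  have hs : 0 < -(a * lnqa q a t) := by rw [key]; exact Real.rpow_pos_of_pos hu0 a
  refine ⟨hs, ?_⟩
  have hpow : (-(a * lnqa q a t)) ^ (1/a) = u := by
    rw [key, ← Real.rpow_mul (le_of_lt hu0), mul_one_div_cancel ha, Real.rpow_one]
  rw [hpow]
  by_cases hq : q = 1
  · rw [hq]; norm_num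
  · have hq1 : (1:ℝ) - q ≠ 0 := fun h => hq (by linarith)
    have : (1:ℝ) - (1-q) * u = t ^ (1-q) := by
      rw [hu]
      unfold lnq
      rw [if_neg hq]
      field_simp
      ring
    rw [this]
    exact Real.rpow_pos_of_pos ht0 _

lemma expqa_pos (ha : a ≠ 0) {τ : ℝ} (h : τ ∈ goodSet q a) : 0 < expqa q a τ := by
  obtain ⟨hs, hb⟩ := h
  unfold expqa expq
  by_cases hq : q = 1
  · rw [if_pos hq]; exact Real.exp_pos _
  · rw [if_neg hq]
    apply Real.rpow_pos_of_pos
    have : 1 + (1-q) * (-(-(a*τ)) ^ (1/a)) = 1 - (1-q) * (-(a*τ)) ^ (1/a) := by ring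
    rw [this]
    exact hb

lemma expqa_rpow_one_sub (ha : a ≠ 0) {τ : ℝ} (h : τ ∈ goodSet q a) :
    expqa q a τ ^ (1 - q) = 1 - (1-q) * (-(a*τ)) ^ (1/a) := by
  obtain ⟨hs, hb⟩ := h
  by_cases hq : q = 1
  · rw [hq]; norm_num
  · unfold expqa expq
    rw [if_neg hq]
    have hbase : 1 + (1-q) * (-(-(a*τ)) ^ (1/a)) = 1 - (1-q) * (-(a*τ)) ^ (1/a) := by ring
    have hbpos : (0:ℝ) < 1 - (1-q) * (-(a*τ)) ^ (1/a) := hb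
    have hq1 : (1:ℝ) - q ≠ 0 := fun h => hq (by linarith)
    rw [hbase, ← Real.rpow_mul hbpos.le, one_div_mul_cancel hq1, Real.rpow_one]

lemma hasDerivAt_inner (ha : a ≠ 0) {τ : ℝ} (hs : 0 < -(a*τ)) :
    HasDerivAt (fun τ' : ℝ => -((-(a*τ')) ^ (1/a))) ((-(a*τ)) ^ ((1-a)/a)) τ := by
  have h1 : HasDerivAt (fun τ' : ℝ => -(a*τ')) (-a) τ := by
    simpa using ((hasDerivAt_id τ).const_mul a).fun_neg
  have h2 := (h1.rpow_const (p := 1/a) (Or.inl (ne_of_gt hs))).fun_neg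
  convert h2 using 1
  · rfl
  · rfl
  rw [show (1-a)/a = 1/a - 1 by field_simp]
  field_simp

lemma hasDerivAt_expqa (ha : a ≠ 0) {τ : ℝ} (h : τ ∈ goodSet q a) :
    HasDerivAt (expqa q a) (expqa q a τ ^ q * (-(a*τ)) ^ ((1-a)/a)) τ := by
  obtain ⟨hs, hb⟩ := h
  have hinner := hasDerivAt_inner ha hs
  by_cases hq : q = 1
  · have hfun : expqa q a = fun τ' : ℝ => Real.exp (-((-(a*τ')) ^ (1/a))) := by
      funext τ'
      unfold expqa expq
      rw [if_pos hq]
    rw [hfun]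
    have hd := hinner.exp
    convert hd using 1
    simp only []
    rw [hq, Real.rpow_one]
  · have hq1 : (1:ℝ) - q ≠ 0 := fun h => hq (by linarith)
    have hfun : expqa q a = fun τ' : ℝ => (1 + (1-q) * (-((-(a*τ')) ^ (1/a)))) ^ (1/(1-q)) := by
      funext τ'
      unfold expqa expq
      rw [if_neg hq]
    have hbpos : (0:ℝ) < 1 + (1-q) * (-((-(a*τ)) ^ (1/a))) := by
      have : 1 + (1-q) * (-((-(a*τ)) ^ (1/a))) = 1 - (1-q) * (-(a*τ)) ^ (1/a) := by ring
      rw [this]; exact hb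
    have hbder : HasDerivAt (fun τ' : ℝ => 1 + (1-q) * (-((-(a*τ')) ^ (1/a))))
        ((1-q) * ((-(a*τ)) ^ ((1-a)/a))) τ := (hinner.const_mul (1-q)).const_add 1
    have h2 := hbder.rpow_const (p := 1/(1-q)) (Or.inl (ne_of_gt hbpos))
    rw [hfun]
    convert h2 using 1
    simp only []
    rw [← Real.rpow_mul hbpos.le, show 1/(1-q) * q = 1/(1-q) - 1 by field_simp; ring]
    field_simp

end Analysis
lemma term_hasDeriv {q a : ℝ} (ha : a ≠ 0) (n j : ℕ) {τ : ℝ} (h : τ ∈ goodSet q a) :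
    HasDerivAt (fun τ' => expqa q a τ' ^ ((n:ℝ)*(q-1)+1) * (-(a*τ')) ^ ((n:ℝ)*(1-a)/a - (j:ℝ)/a))
      (expqa q a τ ^ ((n:ℝ)*(q-1)+q) *
        ((((n:ℝ)*a+(j:ℝ))*(q-1)+1) * (-(a*τ)) ^ (((n:ℝ)+1)*(1-a)/a - (j:ℝ)/a)
         + ((j:ℝ) - (n:ℝ)*(1-a)) * (-(a*τ)) ^ (((n:ℝ)+1)*(1-a)/a - ((j:ℝ)+1)/a))) τ := by
  obtain ⟨hs, hb⟩ := h
  have hE : 0 < expqa q a τ := expqa_pos ha ⟨hs, hb⟩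
  have hE1q : expqa q a τ ^ (1 - q) = 1 - (1-q) * (-(a*τ)) ^ (1/a) :=
    expqa_rpow_one_sub ha ⟨hs, hb⟩
  have hline : HasDerivAt (fun τ' : ℝ => -(a * τ')) (-a) τ := by
    simpa using ((hasDerivAt_id τ).const_mul a).fun_neg
  have h1 : HasDerivAt (fun τ' => expqa q a τ' ^ ((n:ℝ)*(q-1)+1))
      ((expqa q a τ ^ q * (-(a*τ)) ^ ((1-a)/a)) * ((n:ℝ)*(q-1)+1)
        * expqa q a τ ^ ((n:ℝ)*(q-1)+1-1)) τ :=
    (hasDerivAt_expqa ha ⟨hs, hb⟩).rpow_const (Or.inl hE.ne')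
  have h2 : HasDerivAt (fun τ' : ℝ => (-(a*τ')) ^ ((n:ℝ)*(1-a)/a - (j:ℝ)/a))
      ((-a) * ((n:ℝ)*(1-a)/a - (j:ℝ)/a) * (-(a*τ)) ^ ((n:ℝ)*(1-a)/a - (j:ℝ)/a - 1)) τ :=
    hline.rpow_const (Or.inl hs.ne')
  have hmul := h1.fun_mul h2
  convert hmul using 1
  · rfl
  · rfl
  set E := expqa q a τ with hEdef
  set s := -(a*τ) with hsdef
  have e1 : E ^ q * E ^ ((n:ℝ)*(q-1)+1-1) = E ^ ((n:ℝ)*(q-1)+q) := by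
    rw [← Real.rpow_add hE]; congr 1; ring
  have e2 : s ^ ((1-a)/a) * s ^ ((n:ℝ)*(1-a)/a - (j:ℝ)/a) = s ^ (((n:ℝ)+1)*(1-a)/a - (j:ℝ)/a) := by
    rw [← Real.rpow_add hs]; congr 1; ring
  have e3 : E ^ ((n:ℝ)*(q-1)+1)
      = E ^ ((n:ℝ)*(q-1)+q) * (1 - (1-q) * s ^ (1/a)) := by
    rw [← hE1q, ← Real.rpow_add hE]; congr 1; ring
  have e4 : s ^ ((n:ℝ)*(1-a)/a - (j:ℝ)/a - 1) = s ^ (((n:ℝ)+1)*(1-a)/a - ((j:ℝ)+1)/a) := by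
    congr 1; field_simp; ring
  have e5 : s ^ (1/a) * s ^ (((n:ℝ)+1)*(1-a)/a - ((j:ℝ)+1)/a)
      = s ^ (((n:ℝ)+1)*(1-a)/a - (j:ℝ)/a) := by
    rw [← Real.rpow_add hs]; congr 1; ring
  have haj : -a * ((n:ℝ)*(1-a)/a - (j:ℝ)/a) = (j:ℝ) - (n:ℝ)*(1-a) := by
    field_simp; ring
  rw [e3, e4, haj, ← e5, ← e1]
  linear_combination (((n:ℝ)*(q-1)+1) * (E ^ q * E ^ ((n:ℝ)*(q-1)+1-1))) * (e5 - e2)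

theorem refined_qexp_higher_derivs (q a : ℝ) (ha : a ≠ 0) :
    ∀ n : ℕ, 1 ≤ n → ∀ τ ∈ lnqa q a '' Set.Ioo 0 1,
      iteratedDeriv n (expqa q a) τ =
        expqa q a τ ^ (((n : ℝ) - 1) * (q - 1) + q) * (-(a * τ)) ^ ((n : ℝ) * (1 - a) / a) *
          ∑ j ∈ Finset.range n, bcoef q a n j * (-(a * τ)) ^ (-(j : ℝ) / a) := by
  intro n hn τ hτ
  have hτU : τ ∈ goodSet q a := mem_goodSet ha τ hτ
  clear hτ
  induction n, hn using Nat.le_induction generalizing τ with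
  | base =>
    rw [iteratedDeriv_one, (hasDerivAt_expqa ha hτU).deriv, Finset.sum_range_one]
    norm_num [bcoef]
  | succ n hn ih =>
    rw [iteratedDeriv_succ]
    have hEq : iteratedDeriv n (expqa q a) =ᶠ[nhds τ] (fun τ' =>
        ∑ j ∈ Finset.range n, bcoef q a n j *
          (expqa q a τ' ^ ((n:ℝ)*(q-1)+1) * (-(a*τ')) ^ ((n:ℝ)*(1-a)/a - (j:ℝ)/a))) := by
      filter_upwards [(isOpen_goodSet q a).mem_nhds hτU] with τ' hτ'
      rw [ih τ' hτ']
      obtain ⟨hs', hb'⟩ := hτ'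
      rw [show ((n:ℝ)-1)*(q-1)+q = (n:ℝ)*(q-1)+1 by ring, mul_assoc, Finset.mul_sum,
        Finset.mul_sum]
      apply Finset.sum_congr rfl
      intro j hj
      have hcomb : (-(a*τ')) ^ ((n:ℝ)*(1-a)/a) * (-(a*τ')) ^ (-(j:ℝ)/a)
          = (-(a*τ')) ^ ((n:ℝ)*(1-a)/a - (j:ℝ)/a) := by
        rw [← Real.rpow_add hs']; congr 1; ring
      rw [← hcomb]; ring
    rw [hEq.deriv_eq]
    have hsum : HasDerivAt (fun τ' =>
        ∑ j ∈ Finset.range n, bcoef q a n j *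
          (expqa q a τ' ^ ((n:ℝ)*(q-1)+1) * (-(a*τ')) ^ ((n:ℝ)*(1-a)/a - (j:ℝ)/a)))
        (∑ j ∈ Finset.range n, bcoef q a n j *
          (expqa q a τ ^ ((n:ℝ)*(q-1)+q) *
            ((((n:ℝ)*a+(j:ℝ))*(q-1)+1) * (-(a*τ)) ^ (((n:ℝ)+1)*(1-a)/a - (j:ℝ)/a)
             + ((j:ℝ) - (n:ℝ)*(1-a)) * (-(a*τ)) ^ (((n:ℝ)+1)*(1-a)/a - ((j:ℝ)+1)/a)))) τ :=
      HasDerivAt.fun_sum (fun j _ => (term_hasDeriv ha n j hτU).const_mul (bcoef q a n j))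
    rw [hsum.deriv]
    obtain ⟨hs, hb⟩ := hτU
    refine Eq.symm ?_
    push_cast
    calc expqa q a τ ^ (((n:ℝ)+1-1)*(q-1)+q) * (-(a*τ)) ^ (((n:ℝ)+1)*(1-a)/a)
          * ∑ j ∈ Finset.range (n+1), bcoef q a (n+1) j * (-(a*τ)) ^ (-(j:ℝ)/a)
        = expqa q a τ ^ ((n:ℝ)*(q-1)+q)
          * ∑ j ∈ Finset.range (n+1), bcoef q a (n+1) j
              * (-(a*τ)) ^ (((n:ℝ)+1)*(1-a)/a - (j:ℝ)/a) := by
          rw [show ((n:ℝ)+1-1)*(q-1)+q = (n:ℝ)*(q-1)+q by ring, mul_assoc, Finset.mul_sum,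
            Finset.mul_sum, Finset.mul_sum]
          apply Finset.sum_congr rfl
          intro j hj
          have hcomb : (-(a*τ)) ^ (((n:ℝ)+1)*(1-a)/a) * (-(a*τ)) ^ (-(j:ℝ)/a)
              = (-(a*τ)) ^ (((n:ℝ)+1)*(1-a)/a - (j:ℝ)/a) := by
            rw [← Real.rpow_add hs]; congr 1; ring
          rw [← hcomb]; ring
      _ = expqa q a τ ^ ((n:ℝ)*(q-1)+q)
          * ∑ j ∈ Finset.range n, bcoef q a n j *
              ((((n:ℝ)*a + (j:ℝ))*(q-1)+1)
                  * (fun j : ℕ => (-(a*τ)) ^ (((n:ℝ)+1)*(1-a)/a - (j:ℝ)/a)) j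
               + ((j:ℝ) - (n:ℝ)*(1-a))
                  * (fun j : ℕ => (-(a*τ)) ^ (((n:ℝ)+1)*(1-a)/a - (j:ℝ)/a)) (j+1)) := by
          rw [sum_id q a n hn (fun j : ℕ => (-(a*τ)) ^ (((n:ℝ)+1)*(1-a)/a - (j:ℝ)/a))]
      _ = ∑ j ∈ Finset.range n, bcoef q a n j *
            (expqa q a τ ^ ((n:ℝ)*(q-1)+q) *
              ((((n:ℝ)*a+(j:ℝ))*(q-1)+1) * (-(a*τ)) ^ (((n:ℝ)+1)*(1-a)/a - (j:ℝ)/a)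
               + ((j:ℝ) - (n:ℝ)*(1-a)) * (-(a*τ)) ^ (((n:ℝ)+1)*(1-a)/a - ((j:ℝ)+1)/a))) := by
          rw [Finset.mul_sum]
          apply Finset.sum_congr rfl
          intro j hj
          simp only []
          have hc : (-(a*τ)) ^ (((n:ℝ)+1)*(1-a)/a - ((j:ℕ)+1:ℕ)/a)
              = (-(a*τ)) ^ (((n:ℝ)+1)*(1-a)/a - ((j:ℝ)+1)/a) := by
            congr 1; push_cast; ring
          rw [hc]; ring
end

section
/- Let 1 < q < 3, a ≠ 0, λ > 0, γ ∈ ℝ, and ξ = (μ,σ) with σ > 1/Z_q. Then the function x ↦ (λ+x²)^γ · (−ℓ_q(x;ξ))^{1−a} · p_q(x;ξ)^q is Lebesgue-integrable on ℝ if and only if γ < 1/2 + 1/(q−1) + a − 1. -/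
open MeasureTheory

/-- The Beta function on positive reals. -/
noncomputable def betaFn (s t : ℝ) : ℝ := ∫ x in (0:ℝ)..1, x ^ (s - 1) * (1 - x) ^ (t - 1)

/-- The normalization constant of the q-Gaussian for 1 < q < 3. -/
noncomputable def Zq (q : ℝ) : ℝ :=
  Real.sqrt ((3 - q) / (q - 1)) * betaFn ((3 - q) / (2 * (q - 1))) (1 / 2)

/-- The q-Gaussian density with location μ and scale σ, for 1 < q < 3. -/
noncomputable def qGauss (q μ σ x : ℝ) : ℝ :=
  (Zq q * σ)⁻¹ * (1 + (q - 1) / (3 - q) * ((x - μ) / σ) ^ 2) ^ (1 / (1 - q))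

/-- The q-likelihood function ℓ_q(x;ξ) = ln_q(p_q(x;ξ)). -/
noncomputable def qLik (q μ σ x : ℝ) : ℝ := (qGauss q μ σ x ^ (1 - q) - 1) / (1 - q)

open Real Set in

lemma betaFn_aux_pos {s : ℝ} (hs : 0 < s) :
    0 < ∫ x in (0:ℝ)..1, x ^ (s - 1) * (1 - x) ^ ((1:ℝ)/2 - 1) := by
  have hint : IntervalIntegrable (fun x : ℝ => x ^ (s-1) * (1-x) ^ ((1:ℝ)/2 - 1)) volume 0 1 := by
    have h1 : IntervalIntegrable (fun x : ℝ => x ^ (s-1) * (1-x) ^ ((1:ℝ)/2 - 1)) volume 0 (1/2) := by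
      apply IntervalIntegrable.mul_continuousOn (intervalIntegral.intervalIntegrable_rpow' (by linarith))
      apply ContinuousOn.rpow_const (by fun_prop)
      intro x hx
      rw [uIcc_of_le (by norm_num)] at hx
      left
      have := hx.2
      intro h
      nlinarith [hx.2]
    have h2 : IntervalIntegrable (fun x : ℝ => x ^ (s-1) * (1-x) ^ ((1:ℝ)/2 - 1)) volume (1/2) 1 := by
      have base : IntervalIntegrable (fun x : ℝ => x ^ ((1:ℝ)/2 - 1)) volume 0 (1/2) :=
        intervalIntegral.intervalIntegrable_rpow' (by norm_num)
      have : IntervalIntegrable (fun x : ℝ => (1-x) ^ ((1:ℝ)/2 - 1)) volume (1/2) 1 := by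
        have h3 := (base.comp_sub_left 1).symm
        have e1 : (1:ℝ) - 1/2 = 1/2 := by norm_num
        have e2 : (1:ℝ) - 0 = 1 := by norm_num
        rwa [e1, e2] at h3
      apply IntervalIntegrable.continuousOn_mul this
      apply ContinuousOn.rpow_const (by fun_prop)
      intro x hx
      rw [uIcc_of_le (by norm_num)] at hx
      left
      nlinarith [hx.1]
    exact h1.trans h2
  apply intervalIntegral.intervalIntegral_pos_of_pos_on hint _ (by norm_num)
  intro x hx
  have h0 : 0 < x := hx.1
  have h1 : x < 1 := hx.2
  exact mul_pos (Real.rpow_pos_of_pos h0 _) (Real.rpow_pos_of_pos (by linarith) _)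

section EscortAux
open Real Set

lemma rpow_sandwich {al be g t : ℝ} (e : ℝ) (hal : 0 < al) (hg : 0 < g)
    (h1 : al * g ≤ t) (h2 : t ≤ be * g) :
    min (al ^ e) (be ^ e) * g ^ e ≤ t ^ e ∧ t ^ e ≤ max (al ^ e) (be ^ e) * g ^ e := by
  have ht : 0 < t := lt_of_lt_of_le (by positivity) h1
  have hbe : 0 < be := by nlinarith
  have key : t ^ e = (t / g) ^ e * g ^ e := by
    rw [← Real.mul_rpow (by positivity) hg.le, div_mul_cancel₀ _ hg.ne']
  have h1' : al ≤ t / g := (le_div_iff₀ hg).2 h1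
  have h2' : t / g ≤ be := (div_le_iff₀ hg).2 h2
  have hge : (0:ℝ) ≤ g ^ e := (Real.rpow_pos_of_pos hg e).le
  rcases le_or_gt 0 e with he | he
  · constructor
    · rw [key]
      exact mul_le_mul_of_nonneg_right ((min_le_left _ _).trans
        (Real.rpow_le_rpow hal.le h1' he)) hge
    · rw [key]
      exact mul_le_mul_of_nonneg_right ((Real.rpow_le_rpow (by positivity) h2' he).trans
        (le_max_right _ _)) hge
  · constructor
    · rw [key]
      exact mul_le_mul_of_nonneg_right ((min_le_right _ _).trans
        (Real.rpow_le_rpow_of_nonpos (lt_of_lt_of_le hal h1') h2' he.le)) hge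
    · rw [key]
      exact mul_le_mul_of_nonneg_right ((Real.rpow_le_rpow_of_nonpos hal h1' he.le).trans
        (le_max_left _ _)) hge

lemma integrable_iff_of_bounds {f g : ℝ → ℝ} {A B : ℝ} (hA : 0 < A)
    (hf : Continuous f) (hg : Continuous g) (hg0 : ∀ x, 0 ≤ g x)
    (h1 : ∀ x, A * g x ≤ f x) (h2 : ∀ x, f x ≤ B * g x) :
    Integrable f ↔ Integrable g := by
  have hf0 : ∀ x, 0 ≤ f x := fun x => le_trans (mul_nonneg hA.le (hg0 x)) (h1 x)
  constructor
  · intro h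
    refine Integrable.mono' (h.const_mul A⁻¹) hg.aestronglyMeasurable
      (Filter.Eventually.of_forall fun x => ?_)
    rw [Real.norm_of_nonneg (hg0 x)]
    rw [inv_mul_eq_div, le_div_iff₀ hA]
    linarith [h1 x]
  · intro h
    refine Integrable.mono' (h.const_mul B) hf.aestronglyMeasurable
      (Filter.Eventually.of_forall fun x => ?_)
    rw [Real.norm_of_nonneg (hf0 x)]
    exact h2 x

lemma integrable_one_add_sq_rpow_iff (b : ℝ) :
    Integrable (fun x : ℝ => (1 + x ^ 2) ^ b) ↔ b < -(1/2) := by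
  constructor
  · intro h
    by_contra hb
    push_neg at hb
    have hsub : IntegrableOn (fun x : ℝ => (1 + x ^ 2) ^ b) (Ioi 1) := h.integrableOn
    have : IntegrableOn (fun x : ℝ => (2:ℝ) ^ (-(1/2):ℝ) * x ^ (-1:ℝ)) (Ioi 1) := by
      refine Integrable.mono' hsub ?_ ?_
      · exact (Measurable.aestronglyMeasurable (by measurability)).restrict
      · filter_upwards [ae_restrict_mem measurableSet_Ioi] with x hx
        have hx1 : (1:ℝ) < x := hx
        have hxpos : (0:ℝ) < x := by linarith
        have e1 : (2:ℝ) ^ (-(1/2):ℝ) * x ^ (-1:ℝ) = (2 * x ^ 2) ^ (-(1/2):ℝ) := by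
          rw [Real.mul_rpow (by norm_num) (by positivity), ← Real.rpow_natCast x 2,
            ← Real.rpow_mul hxpos.le]
          norm_num
        rw [Real.norm_of_nonneg (by positivity), e1]
        calc (2 * x ^ 2) ^ (-(1/2):ℝ) ≤ (1 + x ^ 2) ^ (-(1/2):ℝ) := by
              apply Real.rpow_le_rpow_of_nonpos (by positivity) (by nlinarith) (by norm_num)
          _ ≤ (1 + x ^ 2) ^ b :=
              Real.rpow_le_rpow_of_exponent_le (by nlinarith) hb
    have := (this.const_mul ((2:ℝ) ^ (-(1/2):ℝ))⁻¹)
    simp only [← mul_assoc, inv_mul_cancel₀ (by positivity : ((2:ℝ) ^ (-(1/2):ℝ)) ≠ 0), one_mul]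
      at this
    exact absurd ((integrableOn_Ioi_rpow_iff zero_lt_one).mp this) (by norm_num)
  · intro hb
    have h := integrable_rpow_neg_one_add_norm_sq (E := ℝ) (μ := volume) (r := -2*b)
      (by simp; linarith)
    have : -(-2*b)/2 = b := by ring
    simpa [this, Real.norm_eq_abs, sq_abs] using h

end EscortAux

open Real Set in
set_option maxHeartbeats 1000000 in
theorem escort_integrability_iff (q a lam gam μ σ : ℝ)
    (hq1 : 1 < q) (hq3 : q < 3) (ha : a ≠ 0) (hlam : 0 < lam) (hσ : 1 / Zq q < σ) :
    Integrable (fun x : ℝ =>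
        (lam + x ^ 2) ^ gam * (-qLik q μ σ x) ^ (1 - a) * qGauss q μ σ x ^ q) ↔
      gam < 1 / 2 + 1 / (q - 1) + a - 1 := by
  have hq1' : (0:ℝ) < q - 1 := by linarith
  have hq3' : (0:ℝ) < 3 - q := by linarith
  have h1q : (1:ℝ) - q < 0 := by linarith
  have hbeta : 0 < betaFn ((3 - q) / (2 * (q - 1))) (1 / 2) :=
    betaFn_aux_pos (by positivity)
  have hZ : 0 < Zq q := mul_pos (Real.sqrt_pos.mpr (by positivity)) hbeta
  have hσpos : 0 < σ := lt_trans (div_pos one_pos hZ) hσ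
  have hw : 1 < Zq q * σ := by
    rw [mul_comm]
    exact (div_lt_iff₀ hZ).mp hσ
  set K := (Zq q * σ)⁻¹ with hKdef
  have hK : 0 < K := inv_pos.mpr (by linarith)
  have hK1 : K < 1 := by
    rw [hKdef]
    exact inv_lt_one_of_one_lt₀ hw
  set c := (q - 1) / (3 - q) with hcdef
  have hc : 0 < c := by positivity
  set u := fun x : ℝ => 1 + c * ((x - μ) / σ) ^ 2 with hudef
  have hu1 : ∀ x, 1 ≤ u x := fun x => le_add_of_nonneg_right (mul_nonneg hc.le (sq_nonneg _))
  have hupos : ∀ x, 0 < u x := fun x => lt_of_lt_of_le one_pos (hu1 x)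
  have hucont : Continuous u := by rw [hudef]; fun_prop
  have hPdef : ∀ x, qGauss q μ σ x = K * u x ^ (1 / (1 - q)) := fun x => rfl
  have hPpos : ∀ x, 0 < qGauss q μ σ x := fun x => by
    rw [hPdef x]; exact mul_pos hK (Real.rpow_pos_of_pos (hupos x) _)
  set d := K ^ ((1:ℝ) - q) with hddef
  have hd1 : 1 < d := (Real.one_lt_rpow_iff_of_pos hK).mpr (Or.inr ⟨hK1, h1q⟩)
  have hLik : ∀ x, -qLik q μ σ x = (d * u x - 1) / (q - 1) := by
    intro x
    have e1 : qGauss q μ σ x ^ ((1:ℝ) - q) = d * u x := by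
      rw [hPdef x, Real.mul_rpow hK.le (Real.rpow_nonneg (hupos x).le _),
        ← Real.rpow_mul (hupos x).le, one_div, inv_mul_cancel₀ (ne_of_lt h1q), Real.rpow_one]
    rw [qLik, e1]
    rw [show (1:ℝ) - q = -(q - 1) by ring, div_neg, neg_neg]
  have hPq : ∀ x, qGauss q μ σ x ^ q = K ^ q * u x ^ (-(q / (q - 1))) := by
    intro x
    rw [hPdef x, Real.mul_rpow hK.le (Real.rpow_nonneg (hupos x).le _),
      ← Real.rpow_mul (hupos x).le]
    congr 2
    field_simp [ne_of_lt h1q]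
    ring
  -- u comparisons with 1 + x^2
  set e := c / σ ^ 2 with hedef
  have he : 0 < e := by positivity
  have hue : ∀ x, u x = 1 + e * (x - μ) ^ 2 := by
    intro x
    show 1 + c * ((x - μ) / σ) ^ 2 = 1 + e * (x - μ) ^ 2
    rw [hedef, div_pow]
    ring
  set M1 := 1 + 2 * μ ^ 2 + 2 * e⁻¹ with hM1def
  set M2 := 1 + 2 * e * μ ^ 2 + 2 * e with hM2def
  have hM1 : 0 < M1 := by positivity
  have hM2 : 0 < M2 := by positivity
  have hulow : ∀ x, M1⁻¹ * (1 + x ^ 2) ≤ u x := by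
    intro x
    rw [inv_mul_le_iff₀ hM1, hue x, hM1def]
    have hkey : e⁻¹ * (e * (x - μ) ^ 2) = (x - μ) ^ 2 := by
      rw [← mul_assoc, inv_mul_cancel₀ he.ne', one_mul]
    nlinarith [sq_nonneg (x - 2*μ), mul_nonneg he.le (sq_nonneg (x - μ)),
      mul_nonneg (mul_nonneg he.le (sq_nonneg μ)) (sq_nonneg (x - μ)),
      inv_pos.mpr he, hkey]
  have huup : ∀ x, u x ≤ M2 * (1 + x ^ 2) := by
    intro x
    rw [hue x, hM2def]
    nlinarith [mul_nonneg he.le (sq_nonneg (x + μ)), sq_nonneg x,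
      mul_nonneg (mul_nonneg he.le (sq_nonneg μ)) (sq_nonneg x), he.le]
  -- -qLik comparisons
  set AL := (d - 1) / (q - 1) * M1⁻¹ with hALdef
  set AU := d / (q - 1) * M2 with hAUdef
  have hALpos : 0 < AL := by
    apply mul_pos (div_pos (by linarith) hq1') (inv_pos.mpr hM1)
  have hLlow : ∀ x, AL * (1 + x ^ 2) ≤ -qLik q μ σ x := by
    intro x
    rw [hLik x]
    have h1 : (d - 1) / (q - 1) * (M1⁻¹ * (1 + x ^ 2)) ≤ (d - 1) / (q - 1) * u x :=
      mul_le_mul_of_nonneg_left (hulow x) (div_nonneg (by linarith) hq1'.le)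
    have h2 : (d - 1) / (q - 1) * u x ≤ (d * u x - 1) / (q - 1) := by
      rw [div_mul_eq_mul_div, div_le_div_iff₀ hq1' hq1']
      nlinarith [hu1 x]
    calc AL * (1 + x ^ 2) = (d - 1) / (q - 1) * (M1⁻¹ * (1 + x ^ 2)) := by rw [hALdef]; ring
      _ ≤ _ := le_trans h1 h2
  have hLup : ∀ x, -qLik q μ σ x ≤ AU * (1 + x ^ 2) := by
    intro x
    rw [hLik x]
    have h2 : (d * u x - 1) / (q - 1) ≤ d / (q - 1) * u x := by
      rw [div_mul_eq_mul_div, div_le_div_iff₀ hq1' hq1']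
      nlinarith [hupos x]
    have h1 : d / (q - 1) * u x ≤ d / (q - 1) * (M2 * (1 + x ^ 2)) :=
      mul_le_mul_of_nonneg_left (huup x) (div_nonneg (by linarith) hq1'.le)
    calc (d * u x - 1) / (q - 1) ≤ d / (q - 1) * (M2 * (1 + x ^ 2)) := le_trans h2 h1
      _ = AU * (1 + x ^ 2) := by rw [hAUdef]; ring
  have hLpos : ∀ x, 0 < -qLik q μ σ x := fun x =>
    lt_of_lt_of_le (mul_pos hALpos (by positivity)) (hLlow x)
  -- lam + x^2 comparisons
  have hlamlow : ∀ x : ℝ, min lam 1 * (1 + x ^ 2) ≤ lam + x ^ 2 := by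
    intro x
    nlinarith [min_le_left lam 1, sq_nonneg x,
      mul_le_mul_of_nonneg_right (min_le_right lam 1) (sq_nonneg x)]
  have hlamup : ∀ x : ℝ, lam + x ^ 2 ≤ max lam 1 * (1 + x ^ 2) := by
    intro x
    nlinarith [le_max_left lam 1, sq_nonneg x,
      mul_le_mul_of_nonneg_right (le_max_right lam 1) (sq_nonneg x)]
  have hminlam : 0 < min lam 1 := lt_min hlam one_pos
  -- assemble
  set r := q / (q - 1) with hrdef
  set b := gam + (1 - a) + -r with hbdef
  set C1m := min (min lam 1 ^ gam) (max lam 1 ^ gam) with hC1m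
  set C1M := max (min lam 1 ^ gam) (max lam 1 ^ gam) with hC1M
  set C2m := min (AL ^ (1 - a)) (AU ^ (1 - a)) with hC2m
  set C2M := max (AL ^ (1 - a)) (AU ^ (1 - a)) with hC2M
  set C3m := min ((M1⁻¹) ^ (-r)) (M2 ^ (-r)) with hC3m
  set C3M := max ((M1⁻¹) ^ (-r)) (M2 ^ (-r)) with hC3M
  have hC1mpos : 0 < C1m := lt_min (Real.rpow_pos_of_pos hminlam _)
    (Real.rpow_pos_of_pos (lt_of_lt_of_le hminlam (min_le_max)) _)
  have hAUpos : 0 < AU := mul_pos (div_pos (by linarith) hq1') hM2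
  have hC2mpos : 0 < C2m := lt_min (Real.rpow_pos_of_pos hALpos _)
    (Real.rpow_pos_of_pos hAUpos _)
  have hC3mpos : 0 < C3m := lt_min (Real.rpow_pos_of_pos (inv_pos.mpr hM1) _)
    (Real.rpow_pos_of_pos hM2 _)
  have hKq : 0 < K ^ q := Real.rpow_pos_of_pos hK q
  set A := C1m * C2m * (K ^ q * C3m) with hAdef
  set B := C1M * C2M * (K ^ q * C3M) with hBdef
  have hA : 0 < A := mul_pos (mul_pos hC1mpos hC2mpos) (mul_pos hKq hC3mpos)
  set g : ℝ → ℝ := fun x => (1 + x ^ 2) ^ b with hgdef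
  have hgpos : ∀ x : ℝ, 0 < (1:ℝ) + x ^ 2 := fun x => by positivity
  have hsplit : ∀ x : ℝ, ((1:ℝ) + x ^ 2) ^ b
      = (1 + x ^ 2) ^ gam * (1 + x ^ 2) ^ (1 - a) * (1 + x ^ 2) ^ (-r) := by
    intro x
    rw [hbdef, Real.rpow_add (hgpos x), Real.rpow_add (hgpos x)]
  have hT1 := fun x : ℝ => rpow_sandwich gam hminlam (hgpos x) (hlamlow x) (hlamup x)
  have hT2 := fun x : ℝ => rpow_sandwich (1 - a) hALpos (hgpos x) (hLlow x) (hLup x)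
  have hT3 := fun x : ℝ => rpow_sandwich (-r) (inv_pos.mpr hM1) (hgpos x) (hulow x) (huup x)
  set f : ℝ → ℝ := fun x =>
    (lam + x ^ 2) ^ gam * (-qLik q μ σ x) ^ (1 - a) * qGauss q μ σ x ^ q with hfdef
  have hfalt : ∀ x, f x
      = (lam + x ^ 2) ^ gam * (-qLik q μ σ x) ^ (1 - a) * (K ^ q * u x ^ (-r)) := by
    intro x
    rw [hfdef]
    dsimp only
    rw [hPq x]
  have nonneg1 : ∀ x : ℝ, (0:ℝ) ≤ (lam + x ^ 2) ^ gam :=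
    fun x => Real.rpow_nonneg (add_pos_of_pos_of_nonneg hlam (sq_nonneg x)).le _
  have nonneg2 : ∀ x, (0:ℝ) ≤ (-qLik q μ σ x) ^ (1 - a) :=
    fun x => Real.rpow_nonneg (hLpos x).le _
  have hflow : ∀ x, A * g x ≤ f x := by
    intro x
    have step : A * g x = C1m * (1 + x ^ 2) ^ gam * (C2m * (1 + x ^ 2) ^ (1 - a))
        * (K ^ q * (C3m * (1 + x ^ 2) ^ (-r))) := by
      rw [hgdef]
      dsimp only
      rw [hsplit x, hAdef]
      ring
    rw [step, hfalt x]
    have n2 : (0:ℝ) ≤ C2m * (1 + x ^ 2) ^ (1 - a) :=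
      mul_nonneg hC2mpos.le (Real.rpow_nonneg (hgpos x).le _)
    have n3 : (0:ℝ) ≤ C3m * (1 + x ^ 2) ^ (-r) :=
      mul_nonneg hC3mpos.le (Real.rpow_nonneg (hgpos x).le _)
    exact mul_le_mul (mul_le_mul (hT1 x).1 (hT2 x).1 n2 (nonneg1 x))
      (mul_le_mul_of_nonneg_left (hT3 x).1 hKq.le)
      (mul_nonneg hKq.le n3) (mul_nonneg (nonneg1 x) (nonneg2 x))
  have hfup : ∀ x, f x ≤ B * g x := by
    intro x
    have step : B * g x = C1M * (1 + x ^ 2) ^ gam * (C2M * (1 + x ^ 2) ^ (1 - a))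
        * (K ^ q * (C3M * (1 + x ^ 2) ^ (-r))) := by
      rw [hgdef]
      dsimp only
      rw [hsplit x, hBdef]
      ring
    rw [step, hfalt x]
    have n1 : (0:ℝ) ≤ C1M * (1 + x ^ 2) ^ gam :=
      mul_nonneg (le_trans hC1mpos.le (min_le_max)) (Real.rpow_nonneg (hgpos x).le _)
    have nU : (0:ℝ) ≤ K ^ q * u x ^ (-r) :=
      mul_nonneg hKq.le (Real.rpow_nonneg (hupos x).le _)
    exact mul_le_mul (mul_le_mul (hT1 x).2 (hT2 x).2 (nonneg2 x) n1)
      (mul_le_mul_of_nonneg_left (hT3 x).2 hKq.le)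
      nU (mul_nonneg n1 (mul_nonneg (le_trans hC2mpos.le min_le_max)
        (Real.rpow_nonneg (hgpos x).le _)))
  -- continuity
  have hQcont : Continuous (qGauss q μ σ) := by
    have hcc : Continuous fun x => K * u x ^ (1 / (1 - q)) :=
      continuous_const.mul (hucont.rpow_const fun x => Or.inl (hupos x).ne')
    exact hcc.congr fun x => (hPdef x).symm
  have hLikcont : Continuous (qLik q μ σ) := by
    have hcc : Continuous fun x => (qGauss q μ σ x ^ ((1:ℝ) - q) - 1) / (1 - q) :=
      ((hQcont.rpow_const fun x => Or.inl (hPpos x).ne').sub continuous_const).div_const _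
    exact hcc
  have hfcont : Continuous f := by
    rw [hfdef]
    refine Continuous.mul (Continuous.mul ?_ ?_) ?_
    · exact (by fun_prop : Continuous fun x : ℝ => lam + x ^ 2).rpow_const
        fun x => Or.inl (add_pos_of_pos_of_nonneg hlam (sq_nonneg x)).ne'
    · exact (hLikcont.neg).rpow_const fun x => Or.inl (hLpos x).ne'
    · exact hQcont.rpow_const fun x => Or.inl (hPpos x).ne'
  have hgcont : Continuous g := by
    rw [hgdef]
    exact (by fun_prop : Continuous fun x : ℝ => 1 + x ^ 2).rpow_const
      fun x => Or.inl (hgpos x).ne'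
  have hg0 : ∀ x, 0 ≤ g x := fun x => Real.rpow_nonneg (hgpos x).le _
  rw [integrable_iff_of_bounds hA hfcont hgcont hg0 hflow hfup, hgdef,
    integrable_one_add_sq_rpow_iff]
  have hrval : r = 1 + 1 / (q - 1) := by
    rw [hrdef]
    field_simp [hq1'.ne']
    ring
  rw [hbdef, hrval]
  constructor <;> intro h <;> linarith
end

section
/- Let 1 < q < 3, n ∈ ℕ, γ ≥ 0. The function x ↦ (1+(q−1)x²)^{((n−1)(q−1)+q)/(1−q)} · x^{2γ} is Lebesgue-integrable on ℝ if and only if γ < 1/2 + 1/(q−1) + n − 1. -/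
open MeasureTheory Set Real

theorem qGaussian_power_moment_integrable_iff (q gam : ℝ) (n : ℕ)
    (hq1 : 1 < q) (hq3 : q < 3) (hn : 1 ≤ n) (hgam : 0 ≤ gam) :
    Integrable (fun x : ℝ =>
        (1 + (q - 1) * x ^ 2) ^ ((((n : ℝ) - 1) * (q - 1) + q) / (1 - q)) * (x ^ 2) ^ gam) ↔
      gam < 1 / 2 + 1 / (q - 1) + (n : ℝ) - 1 := by
  have hq : 0 < q - 1 := by linarith
  set c : ℝ := (((n : ℝ) - 1) * (q - 1) + q) / (1 - q) with hcdef
  set f : ℝ → ℝ := fun x => (1 + (q - 1) * x ^ 2) ^ c * (x ^ 2) ^ gam with hf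
  have hn1 : (1 : ℝ) ≤ (n : ℝ) := by exact_mod_cast hn
  have hc : c = -((n : ℝ) + 1 / (q - 1)) := by
    rw [hcdef, div_eq_iff (by linarith : (1 : ℝ) - q ≠ 0)]
    field_simp
    ring
  have hcneg : c < 0 := by
    rw [hc]
    have : 0 < 1 / (q - 1) := by positivity
    linarith
  -- positivity of the base
  have hbase : ∀ x : ℝ, (0 : ℝ) < 1 + (q - 1) * x ^ 2 := fun x => by nlinarith [sq_nonneg x]
  have hfnonneg : ∀ x : ℝ, 0 ≤ f x := fun x => by
    apply mul_nonneg (Real.rpow_nonneg (hbase x).le _) (Real.rpow_nonneg (sq_nonneg x) _)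
  have hmeas : Continuous f := by
    apply Continuous.mul
    · exact (continuous_const.add (continuous_const.mul (continuous_pow 2))).rpow_const
        (fun x => Or.inl (hbase x).ne')
    · exact (Real.continuous_rpow_const hgam).comp (continuous_pow 2)
  -- rewrite on positive reals
  have hval : ∀ x : ℝ, 0 < x → (x ^ 2 : ℝ) ^ gam = x ^ (2 * gam) := by
    intro x hx
    rw [← Real.rpow_natCast x 2, ← Real.rpow_mul hx.le]
    norm_num
  have hvalc : ∀ x : ℝ, 0 < x → (x ^ 2 : ℝ) ^ c = x ^ (2 * c) := by
    intro x hx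
    rw [← Real.rpow_natCast x 2, ← Real.rpow_mul hx.le]
    norm_num
  -- Step A : integrable iff integrable on Ioi 0
  have stepA : Integrable f ↔ IntegrableOn f (Ioi 0) := by
    constructor
    · exact fun h => h.integrableOn
    · intro h
      rw [← integrableOn_univ, ← @Iio_union_Ici _ _ (0 : ℝ), integrableOn_union,
        integrableOn_Ici_iff_integrableOn_Ioi]
      refine ⟨?_, h⟩
      rw [← (Measure.measurePreserving_neg (volume : Measure ℝ)).integrableOn_comp_preimage
          (Homeomorph.neg ℝ).measurableEmbedding]
      have : (fun x : ℝ => f (-x)) = f := by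
        funext x; simp [hf, neg_sq]
      simpa [Function.comp_def, neg_sq, neg_preimage, neg_Iio, neg_neg, neg_zero, this] using h
  -- Step B : integrable on Ioi 0 iff exponent condition
  have stepB : IntegrableOn f (Ioi 0) ↔ 2 * gam + 2 * c < -1 := by
    constructor
    · intro h
      -- restrict to Ioi 1, lower bound by q ^ c * x ^ (2 gam + 2 c)
      have h1 : IntegrableOn f (Ioi 1) := h.mono_set (Ioi_subset_Ioi zero_le_one)
      have key : IntegrableOn (fun x : ℝ => x ^ (2 * gam + 2 * c)) (Ioi 1) := by
        apply Integrable.mono' (h1.const_mul (q ^ (-c)))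
        · exact (ContinuousOn.aestronglyMeasurable
            (ContinuousOn.rpow_const continuousOn_id
              (fun x hx => Or.inl (ne_of_gt (lt_trans zero_lt_one hx))))
            measurableSet_Ioi)
        · filter_upwards [ae_restrict_mem measurableSet_Ioi] with x hx
          have hx1 : (1 : ℝ) < x := hx
          have hx0 : (0 : ℝ) < x := lt_trans zero_lt_one hx1
          rw [Real.norm_eq_abs, abs_of_nonneg (Real.rpow_nonneg hx0.le _)]
          have hle : 1 + (q - 1) * x ^ 2 ≤ q * x ^ 2 := by nlinarith
          have h2 : (q * x ^ 2 : ℝ) ^ c ≤ (1 + (q - 1) * x ^ 2) ^ c :=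
            Real.rpow_le_rpow_of_nonpos (by positivity) hle hcneg.le
          have h3 : (q * x ^ 2 : ℝ) ^ c = q ^ c * x ^ (2 * c) := by
            rw [Real.mul_rpow (by linarith) (sq_nonneg x), hvalc x hx0]
          calc x ^ (2 * gam + 2 * c) = q ^ (-c) * (q ^ c * x ^ (2 * c) * x ^ (2 * gam)) := by
                rw [show 2 * gam + 2 * c = 2 * c + 2 * gam by ring,
                  Real.rpow_add hx0, ← mul_assoc, ← mul_assoc,
                  ← Real.rpow_add (by linarith : (0:ℝ) < q), neg_add_cancel, Real.rpow_zero,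
                  one_mul]
            _ ≤ q ^ (-c) * f x := by
                apply mul_le_mul_of_nonneg_left _ (Real.rpow_nonneg (by linarith) _)
                rw [hf]
                simp only
                rw [hval x hx0]
                exact mul_le_mul_of_nonneg_right (h3 ▸ h2) (Real.rpow_nonneg hx0.le _)
      rw [integrableOn_Ioi_rpow_iff zero_lt_one] at key
      linarith
    · intro hlt
      rw [show Ioi (0:ℝ) = Ioc 0 1 ∪ Ioi 1 from (Ioc_union_Ioi_eq_Ioi zero_le_one).symm,
        integrableOn_union]
      constructor
      · -- bounded by 1 on Ioc 0 1
        apply Integrable.mono' (integrableOn_const (C := (1:ℝ)) measure_Ioc_lt_top.ne)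
        · exact hmeas.aestronglyMeasurable.restrict
        · filter_upwards [ae_restrict_mem measurableSet_Ioc] with x hx
          rw [Real.norm_eq_abs, abs_of_nonneg (hfnonneg x)]
          have hx2 : x ^ 2 ≤ 1 := by
            rcases hx with ⟨hx0, hx1⟩
            nlinarith
          have h1 : (1 + (q - 1) * x ^ 2 : ℝ) ^ c ≤ 1 :=
            Real.rpow_le_one_of_one_le_of_nonpos (by nlinarith [sq_nonneg x]) hcneg.le
          have h2 : (x ^ 2 : ℝ) ^ gam ≤ 1 := Real.rpow_le_one (sq_nonneg x) hx2 hgam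
          calc f x ≤ 1 * 1 := mul_le_mul h1 h2 (Real.rpow_nonneg (sq_nonneg x) _)
                (by norm_num)
            _ = 1 := by norm_num
      · -- bounded by (q-1)^c * x^(2 gam + 2 c) on Ioi 1
        have hmaj : IntegrableOn (fun x : ℝ => (q - 1) ^ c * x ^ (2 * gam + 2 * c)) (Ioi 1) :=
          ((integrableOn_Ioi_rpow_iff zero_lt_one).2 hlt).const_mul _
        apply Integrable.mono' hmaj
        · exact hmeas.aestronglyMeasurable.restrict
        · filter_upwards [ae_restrict_mem measurableSet_Ioi] with x hx
          have hx1 : (1 : ℝ) < x := hx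
          have hx0 : (0 : ℝ) < x := lt_trans zero_lt_one hx1
          rw [Real.norm_eq_abs, abs_of_nonneg (hfnonneg x)]
          have hle : (q - 1) * x ^ 2 ≤ 1 + (q - 1) * x ^ 2 := by linarith
          have h2 : (1 + (q - 1) * x ^ 2 : ℝ) ^ c ≤ ((q - 1) * x ^ 2) ^ c :=
            Real.rpow_le_rpow_of_nonpos (by positivity) hle hcneg.le
          have h3 : ((q - 1) * x ^ 2 : ℝ) ^ c = (q - 1) ^ c * x ^ (2 * c) := by
            rw [Real.mul_rpow hq.le (sq_nonneg x), hvalc x hx0]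
          calc f x ≤ ((q - 1) * x ^ 2) ^ c * (x ^ 2) ^ gam :=
                mul_le_mul_of_nonneg_right h2 (Real.rpow_nonneg (sq_nonneg x) _)
            _ = (q - 1) ^ c * x ^ (2 * gam + 2 * c) := by
                rw [h3, hval x hx0, mul_assoc, ← Real.rpow_add hx0]
                ring_nf
  -- conclude
  rw [stepA, stepB, hc]
  constructor <;> intro h <;> linarith
end

section
/- Let 1 < q < 3, n ∈ ℕ, k ∈ {0,...,n}, and ξ = (μ,σ) with σ > 0. Then ∫_ℝ ((x−μ)/σ)^{2k} p_q(x;ξ)^{(n−1)(q−1)+q} dx = (σ/(Z_qσ)^{(n−1)(q−1)+q}) · ((3−q)/(q−1))^{k+1/2} · B((3−q)/(2(q−1)) + n − k, 1/2 + k). -/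
open MeasureTheory Set Real

lemma betaFn_nonneg (s t : ℝ) : 0 ≤ betaFn s t := by
  refine intervalIntegral.integral_nonneg zero_le_one fun x hx => ?_
  exact mul_nonneg (Real.rpow_nonneg hx.1 _) (Real.rpow_nonneg (by linarith [hx.2]) _)

lemma image_aux : (fun z : ℝ => (1 + z^2)⁻¹) '' Set.Ioi 0 = Set.Ioo 0 1 := by
  ext y
  constructor
  · rintro ⟨z, hz, rfl⟩
    have hz0 : (0:ℝ) < z := hz
    have h1 : (1:ℝ) < 1 + z^2 := by nlinarith
    exact ⟨inv_pos.mpr (by linarith), inv_lt_one_of_one_lt₀ h1⟩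
  · rintro ⟨hy0, hy1⟩
    refine ⟨Real.sqrt (1/y - 1), ?_, ?_⟩
    · have : 0 < 1/y - 1 := by
        rw [lt_sub_iff_add_lt, zero_add, lt_div_iff₀ hy0, one_mul]; exact hy1
      exact Real.sqrt_pos.mpr this
    · have h : 0 ≤ 1/y - 1 := by
        rw [sub_nonneg, le_div_iff₀ hy0, one_mul]; exact hy1.le
      simp only [Real.sq_sqrt h]
      field_simp
      ring

lemma core (p : ℝ) (k : ℕ) (hp : (k:ℝ) + 1/2 < p) :
    ∫ z : ℝ, z ^ (2*k) * (1 + z^2) ^ (-p) = betaFn (p - (k:ℝ) - 1/2) (1/2 + (k:ℝ)) := by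
  set s : ℝ := p - (k:ℝ) - 1/2 with hs
  set t : ℝ := 1/2 + (k:ℝ) with ht
  have h1 : betaFn s t = ∫ x in Ioo (0:ℝ) 1, x ^ (s-1) * (1 - x) ^ (t-1) := by
    rw [betaFn, intervalIntegral.integral_of_le zero_le_one, integral_Ioc_eq_integral_Ioo]
  have hderiv : ∀ z ∈ Ioi (0:ℝ), HasDerivWithinAt (fun z : ℝ => (1 + z^2)⁻¹)
      (-(2*z) / (1 + z^2)^2) (Ioi 0) z := by
    intro z hz
    have h0 : (1 + z^2) ≠ 0 := by positivity
    have : HasDerivAt (fun z : ℝ => (1 + z^2)⁻¹) (-(2*z) / (1 + z^2)^2) z := by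
      have h := ((hasDerivAt_pow 2 z).const_add 1).inv h0
      simp at h; exact h
    exact this.hasDerivWithinAt
  have hinj : InjOn (fun z : ℝ => (1 + z^2)⁻¹) (Ioi 0) := by
    intro a ha b hb hab
    have ha0 : (0:ℝ) < a := ha
    have hb0 : (0:ℝ) < b := hb
    simp only at hab
    have hA : (1 + a^2) ≠ 0 := by positivity
    have hB : (1 + b^2) ≠ 0 := by positivity
    field_simp at hab
    nlinarith
  have hsub := integral_image_eq_integral_abs_deriv_smul measurableSet_Ioi hderiv hinj
    (fun x => x ^ (s-1) * (1 - x) ^ (t-1))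
  rw [image_aux] at hsub
  have h2 : ∀ z ∈ Ioi (0:ℝ),
      |(-(2*z) / (1 + z^2)^2)| • (((1 + z^2)⁻¹) ^ (s-1) * (1 - (1 + z^2)⁻¹) ^ (t-1))
        = 2 * (z ^ (2*k) * (1 + z^2) ^ (-p)) := by
    intro z hz
    have hz0 : (0:ℝ) < z := hz
    have hw : (0:ℝ) < 1 + z^2 := by positivity
    have habs : |(-(2*z) / (1 + z^2)^2)| = 2*z / (1 + z^2)^2 := by
      rw [abs_div, abs_neg, abs_of_nonneg (by positivity : (0:ℝ) ≤ 2*z),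
        abs_of_nonneg (by positivity : (0:ℝ) ≤ (1+z^2)^2)]
    have hone : 1 - (1 + z^2)⁻¹ = z^2 / (1 + z^2) := by field_simp; ring
    have e1 : ((1:ℝ) + z^2)⁻¹ ^ (s-1) = (1+z^2) ^ (-(s-1)) := by
      rw [Real.inv_rpow hw.le, ← Real.rpow_neg hw.le]
    have e2 : (z^2/(1+z^2)) ^ (t-1) = z ^ ((2:ℝ)*(t-1)) * (1+z^2) ^ (-(t-1)) := by
      rw [Real.div_rpow (by positivity) hw.le, div_eq_mul_inv, ← Real.rpow_neg hw.le]
      congr 1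
      rw [← Real.rpow_natCast z 2, ← Real.rpow_mul hz0.le]
      norm_num
    have e3 : (1+z^2)^2 = (1+z^2) ^ (2:ℝ) := by
      rw [← Real.rpow_natCast (1+z^2) 2]; norm_num
    rw [habs, hone, smul_eq_mul, e1, e2, e3, div_eq_mul_inv, ← Real.rpow_neg hw.le]
    have e4 : (1+z^2) ^ (-p) = (1+z^2) ^ (-(s-1)) * ((1+z^2) ^ (-(t-1)) * (1+z^2) ^ (-(2:ℝ))) := by
      rw [← Real.rpow_add hw, ← Real.rpow_add hw]
      congr 1
      rw [hs, ht]; ring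
    have e5 : z ^ (2*k) = z * z ^ ((2:ℝ)*(t-1)) := by
      rw [ht]
      have : (2:ℝ) * ((1:ℝ)/2 + (k:ℝ) - 1) = (2*(k:ℝ) - 1) := by ring
      rw [this]
      nth_rewrite 2 [← Real.rpow_one z]
      rw [← Real.rpow_add hz0, ← Real.rpow_natCast z (2*k)]
      congr 1
      push_cast; ring
    rw [e4, e5]; ring
  calc ∫ z : ℝ, z ^ (2*k) * (1 + z^2) ^ (-p)
      = ∫ z : ℝ, (fun y => y ^ (2*k) * (1 + y^2) ^ (-p)) |z| := by
        congr 1; ext z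
        simp only [sq_abs, pow_mul, sq_abs]
    _ = 2 * ∫ z in Ioi (0:ℝ), z ^ (2*k) * (1 + z^2) ^ (-p) := integral_comp_abs (f := fun y => y ^ (2*k) * (1 + y^2) ^ (-p))
    _ = ∫ z in Ioi (0:ℝ), 2 * (z ^ (2*k) * (1 + z^2) ^ (-p)) := by
        rw [← integral_const_mul]
    _ = betaFn s t := by
        rw [h1, hsub]
        exact (setIntegral_congr_fun measurableSet_Ioi h2).symm

theorem qGaussian_moment_formula (q μ σ : ℝ) (n k : ℕ)
    (hq1 : 1 < q) (hq3 : q < 3) (hn : 1 ≤ n) (hk : k ≤ n) (hσ : 0 < σ) :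
    ∫ x : ℝ, ((x - μ) / σ) ^ (2 * k) * qGauss q μ σ x ^ (((n : ℝ) - 1) * (q - 1) + q) =
      σ / (Zq q * σ) ^ (((n : ℝ) - 1) * (q - 1) + q) * ((3 - q) / (q - 1)) ^ ((k : ℝ) + 1 / 2) *
        betaFn ((3 - q) / (2 * (q - 1)) + (n : ℝ) - (k : ℝ)) (1 / 2 + (k : ℝ)) := by
  have hq1' : (0:ℝ) < q - 1 := by linarith
  have h3q : (0:ℝ) < 3 - q := by linarith
  set E : ℝ := ((n : ℝ) - 1) * (q - 1) + q with hE
  set β : ℝ := (q - 1) / (3 - q) with hβ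
  have hβ0 : 0 < β := div_pos hq1' h3q
  set p : ℝ := E / (q - 1) with hpdef
  have hkn : (k:ℝ) ≤ (n:ℝ) := by exact_mod_cast hk
  have harg : p - (k:ℝ) - 1/2 = (3 - q) / (2 * (q - 1)) + (n:ℝ) - (k:ℝ) := by
    rw [hpdef, hE]; field_simp; ring
  have hp : (k:ℝ) + 1/2 < p := by
    have h2 : 0 < (3 - q) / (2 * (q - 1)) := by positivity
    have := harg
    linarith
  have hZ0 : 0 ≤ Zq q := mul_nonneg (Real.sqrt_nonneg _) (betaFn_nonneg _ _)
  have hZσ : 0 ≤ Zq q * σ := mul_nonneg hZ0 hσ.le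
  -- pointwise rewriting of the integrand
  have hpt : ∀ x : ℝ, ((x - μ) / σ) ^ (2 * k) * qGauss q μ σ x ^ E =
      ((Zq q * σ) ^ E)⁻¹ * (((x - μ) / σ) ^ (2 * k) * (1 + β * ((x - μ) / σ) ^ 2) ^ (-p)) := by
    intro x
    set u : ℝ := (x - μ) / σ
    have hw : (0:ℝ) < 1 + β * u ^ 2 := by positivity
    rw [qGauss, Real.mul_rpow (inv_nonneg.mpr hZσ) (Real.rpow_nonneg hw.le _),
      ← Real.rpow_mul hw.le, Real.inv_rpow hZσ]
    have hexp : 1 / (1 - q) * E = -p := by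
      have h1q : (1:ℝ) - q ≠ 0 := by linarith
      rw [hpdef]; field_simp; ring
    rw [hexp]; ring
  simp_rw [hpt]
  rw [integral_const_mul]
  -- translation and scaling
  have hstep1 : (∫ x : ℝ, ((x - μ) / σ) ^ (2 * k) * (1 + β * ((x - μ) / σ) ^ 2) ^ (-p))
      = σ * ∫ y : ℝ, y ^ (2 * k) * (1 + β * y ^ 2) ^ (-p) := by
    have h1 : (∫ x : ℝ, ((x - μ) / σ) ^ (2 * k) * (1 + β * ((x - μ) / σ) ^ 2) ^ (-p))
        = ∫ x : ℝ, (fun y : ℝ => (y / σ) ^ (2 * k) * (1 + β * (y / σ) ^ 2) ^ (-p)) (x - μ) := by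
      simp only [sub_div]
    rw [h1, integral_sub_right_eq_self (fun y : ℝ => (y / σ) ^ (2 * k) * (1 + β * (y / σ) ^ 2) ^ (-p)) μ,
      Measure.integral_comp_div (fun y : ℝ => y ^ (2 * k) * (1 + β * y ^ 2) ^ (-p)) σ,
      smul_eq_mul, abs_of_pos hσ]
  rw [hstep1]
  -- scaling by sqrt β
  have hstep2 : (∫ y : ℝ, y ^ (2 * k) * (1 + β * y ^ 2) ^ (-p))
      = (β ^ k)⁻¹ * ((Real.sqrt β)⁻¹ * ∫ z : ℝ, z ^ (2 * k) * (1 + z ^ 2) ^ (-p)) := by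
    have hsq : Real.sqrt β ^ 2 = β := Real.sq_sqrt hβ0.le
    have hsβ : 0 < Real.sqrt β := Real.sqrt_pos.mpr hβ0
    have h2 : ∀ y : ℝ, y ^ (2 * k) * (1 + β * y ^ 2) ^ (-p)
        = (β ^ k)⁻¹ * ((fun z : ℝ => z ^ (2 * k) * (1 + z ^ 2) ^ (-p)) (Real.sqrt β * y)) := by
      intro y
      simp only
      have e1 : (Real.sqrt β * y) ^ (2 * k) = β ^ k * y ^ (2 * k) := by
        rw [mul_pow, pow_mul, hsq, pow_mul]
      have e2 : (Real.sqrt β * y) ^ 2 = β * y ^ 2 := by rw [mul_pow, hsq]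
      rw [e1, e2]
      have hβk : (β ^ k : ℝ) ≠ 0 := by positivity
      field_simp
    simp_rw [h2]
    rw [integral_const_mul,
      Measure.integral_comp_mul_left (fun z : ℝ => z ^ (2 * k) * (1 + z ^ 2) ^ (-p)) (Real.sqrt β),
      smul_eq_mul, abs_of_pos (inv_pos.mpr hsβ)]
  rw [hstep2, core p k hp, harg]
  -- constants
  have hc : ((3 - q) / (q - 1)) ^ ((k : ℝ) + 1 / 2) = (β ^ k)⁻¹ * (Real.sqrt β)⁻¹ := by
    have hβinv : (3 - q) / (q - 1) = β⁻¹ := by rw [hβ, inv_div]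
    rw [hβinv, Real.inv_rpow hβ0.le, Real.rpow_add hβ0, Real.rpow_natCast,
      ← Real.sqrt_eq_rpow, mul_inv]
  rw [hc, div_eq_mul_inv]
  ring
end
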